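/- arXiv:1608.03342 — 8 statements merged into one kernel-verified Lean document; each statement's English description precedes it below -/
import Mathlib

section
/- For 0<q<1, ∫_0^1 ∫_0^{x₂} 1 d_q x₁ d_q x₂ = 1/(1+q) and ∫_0^1 ∫_{x₁}^1 1 d_q x₂ d_q x₁ = q/(1+q); in particular Fubini's theorem fails for q-integrals. -/
/-- The Jackson `q`-integral `∫_a^b f(x) d_q x`. -/
noncomputable def qInt (q a b : ℝ) (f : ℝ → ℝ) : ℝ :=
  (1 - q) * ∑' i : ℕ, (f (b * q ^ i) * (b * q ^ i) - f (a * q ^ i) * (a * q ^ i))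

theorem stmt3 (q : ℝ) (hq0 : 0 < q) (hq1 : q < 1) :
    qInt q 0 1 (fun x2 => qInt q 0 x2 (fun _ => 1)) = 1 / (1 + q) ∧
    qInt q 0 1 (fun x1 => qInt q x1 1 (fun _ => 1)) = q / (1 + q) ∧
    qInt q 0 1 (fun x2 => qInt q 0 x2 (fun _ => 1)) ≠
      qInt q 0 1 (fun x1 => qInt q x1 1 (fun _ => 1)) := by
  have hq1' : (1 : ℝ) - q ≠ 0 := by linarith
  have hq1p : (1 : ℝ) + q ≠ 0 := by linarith
  have hgeo : ∑' i : ℕ, q ^ i = (1 - q)⁻¹ :=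
    tsum_geometric_of_lt_one hq0.le hq1
  have hq2 : q ^ 2 < 1 := by nlinarith
  have hq2' : (0:ℝ) ≤ q ^ 2 := by positivity
  have hgeo2 : ∑' i : ℕ, (q ^ 2) ^ i = (1 - q ^ 2)⁻¹ :=
    tsum_geometric_of_lt_one hq2' hq2
  have hsum : Summable (fun i : ℕ => q ^ i) :=
    summable_geometric_of_lt_one hq0.le hq1
  have hsum2 : Summable (fun i : ℕ => (q ^ 2) ^ i) :=
    summable_geometric_of_lt_one hq2' hq2
  have inner1 : ∀ b : ℝ, qInt q 0 b (fun _ => 1) = b := by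
    intro b
    unfold qInt
    simp only [one_mul, zero_mul, mul_zero, sub_zero]
    rw [tsum_mul_left, hgeo]
    field_simp
  have inner2 : ∀ a : ℝ, qInt q a 1 (fun _ => 1) = 1 - a := by
    intro a
    unfold qInt
    simp only [one_mul]
    have : ∀ i : ℕ, q ^ i - a * q ^ i = (1 - a) * q ^ i := fun i => by ring
    rw [tsum_congr this, tsum_mul_left, hgeo]
    field_simp
  have h1 : qInt q 0 1 (fun x2 => qInt q 0 x2 (fun _ => 1)) = 1 / (1 + q) := by
    simp only [inner1]
    unfold qInt
    simp only [one_mul, zero_mul, mul_zero, sub_zero]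
    have : ∀ i : ℕ, q ^ i * q ^ i = (q ^ 2) ^ i := fun i => by ring
    rw [tsum_congr this, hgeo2]
    rw [show (1:ℝ) - q ^ 2 = (1 - q) * (1 + q) by ring]
    field_simp
  have h2 : qInt q 0 1 (fun x1 => qInt q x1 1 (fun _ => 1)) = q / (1 + q) := by
    simp only [inner2]
    unfold qInt
    simp only [zero_mul, mul_zero, sub_zero]
    have : ∀ i : ℕ, (1 - 1 * q ^ i) * (1 * q ^ i) = q ^ i - (q ^ 2) ^ i := fun i => by
      ring
    rw [tsum_congr this, Summable.tsum_sub hsum hsum2, hgeo, hgeo2]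
    rw [show (1:ℝ) - q ^ 2 = (1 - q) * (1 + q) by ring]
    field_simp
    ring
  refine ⟨h1, h2, ?_⟩
  rw [h1, h2]
  intro h
  have : (1:ℝ) = q := by
    field_simp at h
    linarith
  linarith
end

section
/- Let π be a permutation of [n] with descent set Des(π), and let r > s ≥ 0 be integers. Then the sum of q^{i₁+⋯+i_n} over all integer sequences r > i₁ ≥ i₂ ≥ ⋯ ≥ i_n ≥ s with i_j > i_{j+1} whenever j ∈ Des(π) equals q^{sn+maj(π)} · (q^{r-s-des(π)};q)_n / (q;q)_n. -/
/-- The value `π(i)` (0-indexed) of a permutation of `Fin n`, extended by `0` outside range. -/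
def permVal {n : ℕ} (π : Equiv.Perm (Fin n)) (i : ℕ) : ℕ :=
  if h : i < n then (π ⟨i, h⟩ : ℕ) else 0

/-- The (0-indexed) descent set of a permutation: positions `i < n-1` with `π(i) > π(i+1)`. -/
def desSet {n : ℕ} (π : Equiv.Perm (Fin n)) : Finset ℕ :=
  (Finset.range (n - 1)).filter fun i => permVal π (i + 1) < permVal π i

/-- The descent number `des(π)`. -/
def desNum {n : ℕ} (π : Equiv.Perm (Fin n)) : ℕ := (desSet π).card

/-- The major index `maj(π)`: the sum of the (1-indexed) descent positions. -/
def maj {n : ℕ} (π : Equiv.Perm (Fin n)) : ℕ := ∑ i ∈ desSet π, (i + 1)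

/-- The `q`-Pochhammer symbol `(a;q)_n = ∏_{k=0}^{n-1} (1 - a q^k)`. -/
noncomputable def qPoch (q a : ℝ) (n : ℕ) : ℝ := ∏ k ∈ Finset.range n, (1 - a * q ^ k)

/-- The `q`-integer `[m]_q = (1-q^m)/(1-q)`. -/
noncomputable def qNum (q : ℝ) (m : ℕ) : ℝ := (1 - q ^ m) / (1 - q)

/-- The `q`-factorial `[n]_q! = [1]_q [2]_q ⋯ [n]_q`. -/
noncomputable def qFact (q : ℝ) (n : ℕ) : ℝ := ∏ k ∈ Finset.range n, qNum q (k + 1)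



open Finset

def boxSet (n m : ℕ) : Finset (Fin n → Fin (m+1)) :=
  univ.filter (fun v => ∀ j l : Fin n, j ≤ l → v l ≤ v j)

noncomputable def boxF (q : ℝ) (n m : ℕ) : ℝ := ∑ v ∈ boxSet n m, q ^ (∑ j, (v j : ℕ))

lemma qPoch_succ (q a : ℝ) (n : ℕ) : qPoch q a (n+1) = qPoch q a n * (1 - a * q ^ n) :=
  Finset.prod_range_succ _ _

lemma qPoch_shift (q a : ℝ) (n : ℕ) : qPoch q a (n+1) = (1 - a) * qPoch q (a*q) n := by
  rw [qPoch, Finset.prod_range_succ']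
  simp only [pow_zero, mul_one]
  rw [mul_comm, qPoch]
  congr 1
  exact Finset.prod_congr rfl fun k _ => by ring

lemma mem_boxSet {n m : ℕ} {v : Fin n → Fin (m+1)} :
    v ∈ boxSet n m ↔ ∀ j l : Fin n, j ≤ l → v l ≤ v j := by
  simp [boxSet]

lemma boxF_zero_n (q : ℝ) (m : ℕ) : boxF q 0 m = 1 := by
  rw [boxF, show boxSet 0 m = univ from by
    simp only [Finset.eq_univ_iff_forall, mem_boxSet]; intro v j; exact j.elim0]
  simp

lemma boxF_zero_m (q : ℝ) (n : ℕ) : boxF q n 0 = 1 := by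
  have : boxSet n 0 = {fun _ => 0} := by
    apply Finset.eq_singleton_iff_unique_mem.2
    exact ⟨mem_boxSet.2 fun j l _ => le_refl _, fun v _ => funext fun j => Fin.ext (by have := (v j).isLt; omega)⟩
  simp [boxF, this]

def shiftDown {n m : ℕ} (v : Fin n → Fin (m+2)) : Fin n → Fin (m+1) :=
  fun k => ⟨(v k : ℕ) - 1, by have := (v k).isLt; omega⟩

def shiftUp {n m : ℕ} (w : Fin n → Fin (m+1)) : Fin n → Fin (m+2) :=
  fun k => ⟨(w k : ℕ) + 1, by have := (w k).isLt; omega⟩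

@[simp] lemma shiftDown_val {n m : ℕ} (v : Fin n → Fin (m+2)) (k : Fin n) :
    (shiftDown v k : ℕ) = (v k : ℕ) - 1 := rfl

@[simp] lemma shiftUp_val {n m : ℕ} (w : Fin n → Fin (m+1)) (k : Fin n) :
    (shiftUp w k : ℕ) = (w k : ℕ) + 1 := rfl

lemma boxF_pascal (q : ℝ) (n m : ℕ) :
    boxF q (n+1) (m+1) = boxF q n (m+1) + q ^ (n+1) * boxF q (n+1) m := by
  have hsplit := Finset.sum_filter_add_sum_filter_not (boxSet (n+1) (m+1))
    (fun v => v (Fin.last n) = 0) (fun v => q ^ (∑ j, (v j : ℕ)))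
  rw [boxF, ← hsplit]
  congr 1
  · -- v last = 0 case
    rw [boxF]
    refine Finset.sum_bij' (fun (v : Fin (n+1) → Fin (m+2)) _ => v ∘ Fin.castSucc)
      (fun (w : Fin n → Fin (m+2)) _ => fun k : Fin (n+1) =>
        if h : (k : ℕ) < n then w ⟨k, h⟩ else 0) ?_ ?_ ?_ ?_ ?_
    · intro v hv
      rw [Finset.mem_filter] at hv
      have hv1 := mem_boxSet.1 hv.1
      exact mem_boxSet.2 fun j l hjl => hv1 _ _ (Fin.castSucc_le_castSucc_iff.2 hjl)
    · intro w hw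
      have hw1 := mem_boxSet.1 hw
      rw [Finset.mem_filter]
      refine ⟨mem_boxSet.2 fun j l hjl => ?_, ?_⟩
      · by_cases hl : (l : ℕ) < n
        · have hj : (j : ℕ) < n := lt_of_le_of_lt hjl hl
          simp only [dif_pos hl, dif_pos hj]
          exact hw1 _ _ hjl
        · simp only [dif_neg hl]
          exact Fin.zero_le _
      · simp [Fin.last]
    · intro v hv
      rw [Finset.mem_filter] at hv
      funext k
      by_cases h : (k : ℕ) < n
      · simp only [dif_pos h, Function.comp]
        exact congrArg v (Fin.ext rfl)
      · simp only [dif_neg h]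
        have : k = Fin.last n := Fin.ext (by have := k.isLt; simp [Fin.last]; omega)
        rw [this, hv.2]
    · intro w hw
      funext k
      simp only [Function.comp]
      rw [dif_pos (show ((k.castSucc : Fin (n+1)) : ℕ) < n from k.isLt)]
      exact congrArg w (Fin.ext rfl)
    · intro v hv
      rw [Finset.mem_filter] at hv
      congr 1
      rw [Fin.sum_univ_castSucc, hv.2]
      simp
  · -- v last ≠ 0 case
    rw [boxF, Finset.mul_sum]
    have key : ∀ v : Fin (n+1) → Fin (m+2),
        v ∈ (boxSet (n+1) (m+1)).filter (fun v => ¬ v (Fin.last n) = 0) →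
        ∀ k, 1 ≤ (v k : ℕ) := by
      intro v hv k
      rw [Finset.mem_filter] at hv
      have h1 : v (Fin.last n) ≤ v k := mem_boxSet.1 hv.1 _ _ (Fin.le_last k)
      have h2 : (v (Fin.last n) : ℕ) ≠ 0 := fun h => hv.2 (Fin.ext h)
      rw [Fin.le_def] at h1
      omega
    refine Finset.sum_bij' (fun (v : Fin (n+1) → Fin (m+2)) _ => shiftDown v)
      (fun (w : Fin (n+1) → Fin (m+1)) _ => shiftUp w) ?_ ?_ ?_ ?_ ?_
    · intro v hv
      have hk := key v hv
      rw [Finset.mem_filter] at hv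
      have hv1 := mem_boxSet.1 hv.1
      refine mem_boxSet.2 fun j l hjl => ?_
      have h2 := hv1 j l hjl
      rw [Fin.le_def] at h2
      rw [Fin.le_def, shiftDown_val, shiftDown_val]
      have := hk j; have := hk l; omega
    · intro w hw
      have hw1 := mem_boxSet.1 hw
      rw [Finset.mem_filter]
      constructor
      · refine mem_boxSet.2 fun j l hjl => ?_
        have h2 := hw1 j l hjl
        rw [Fin.le_def] at h2
        rw [Fin.le_def, shiftUp_val, shiftUp_val]
        omega
      · intro h
        have h3 := congrArg Fin.val h
        rw [shiftUp_val] at h3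
        simp at h3
    · intro v hv
      have hk := key v hv
      funext k
      apply Fin.ext
      rw [shiftUp_val, shiftDown_val]
      have := hk k; omega
    · intro w hw
      funext k
      apply Fin.ext
      rw [shiftDown_val, shiftUp_val]
      omega
    · intro v hv
      have hk := key v hv
      rw [← pow_add]
      congr 1
      have : ∀ j : Fin (n+1), (v j : ℕ) = 1 + (shiftDown v j : ℕ) := by
        intro j; rw [shiftDown_val]; have := hk j; omega
      rw [Finset.sum_congr rfl (fun j _ => this j), Finset.sum_add_distrib]
      simp [add_comm]

lemma qPoch_q_pos {q : ℝ} (hq0 : 0 < q) (hq1 : q < 1) (n : ℕ) : 0 < qPoch q q n := by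
  refine Finset.prod_pos fun k _ => ?_
  have h1 : q * q ^ k ≤ q ^ k := by
    have : q ^ k ≤ 1 := pow_le_one₀ (le_of_lt hq0) (le_of_lt hq1)
    nlinarith [pow_pos hq0 k]
  have h2 : q ^ k ≤ 1 := pow_le_one₀ (le_of_lt hq0) (le_of_lt hq1)
  have h3 : 0 < q ^ k := pow_pos hq0 k
  nlinarith

lemma boxF_eq_aux (q : ℝ) : ∀ N n m, n + m ≤ N →
    boxF q n m * qPoch q q n = qPoch q (q ^ (m+1)) n := by
  intro N
  induction N with
  | zero =>
    intro n m h
    have hn : n = 0 := by omega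
    subst hn
    simp [boxF_zero_n, qPoch]
  | succ N ih =>
    intro n m h
    match n, m with
    | 0, m => simp [boxF_zero_n, qPoch]
    | n+1, 0 =>
      rw [boxF_zero_m, one_mul, pow_one]
    | n+1, m+1 =>
      have h1 := ih n (m+1) (by omega)
      have h2 := ih (n+1) m (by omega)
      rw [qPoch_shift q (q^(m+1)) n, show q^(m+1) * q = q^(m+2) from by ring,
        qPoch_succ q q n] at h2
      rw [boxF_pascal, qPoch_succ q q n, qPoch_succ q (q^(m+1+1)) n]
      show (boxF q n (m+1) + q^(n+1) * boxF q (n+1) m) * (qPoch q q n * (1 - q * q^n))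
        = qPoch q (q^(m+2)) n * (1 - q^(m+2) * q^n)
      linear_combination (1 - q * q^n) * h1 + q^(n+1) * h2

lemma boxF_eq {q : ℝ} (hq0 : 0 < q) (hq1 : q < 1) (n m : ℕ) :
    boxF q n m = qPoch q (q ^ (m+1)) n / qPoch q q n := by
  rw [eq_div_iff (ne_of_gt (qPoch_q_pos hq0 hq1 n))]
  exact boxF_eq_aux q (n+m) n m le_rfl





lemma count_succ (S : Finset ℕ) (j l : ℕ) (hjl : j ≤ l) :
    (S.filter fun i => j ≤ i ∧ i < l+1).card
      = (S.filter fun i => j ≤ i ∧ i < l).card + (if l ∈ S then 1 else 0) := by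
  have hsplit : (S.filter fun i => j ≤ i ∧ i < l+1)
      = (S.filter fun i => j ≤ i ∧ i < l) ∪ (S.filter fun i => i = l) := by
    ext a
    simp only [Finset.mem_filter, Finset.mem_union]
    constructor
    · rintro ⟨hS, hj, hl⟩
      by_cases h : a = l
      · exact Or.inr ⟨hS, h⟩
      · exact Or.inl ⟨hS, hj, by omega⟩
    · rintro (⟨hS, hj, hl⟩ | ⟨hS, rfl⟩)
      · exact ⟨hS, hj, by omega⟩
      · exact ⟨hS, hjl, by omega⟩
  rw [hsplit, Finset.card_union_of_disjoint, Finset.filter_eq']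
  · split <;> simp
  · rw [Finset.disjoint_left]
    intro a ha hb
    simp only [Finset.mem_filter] at ha hb
    omega

lemma count_split (S : Finset ℕ) (j l : ℕ) (hjl : j ≤ l) :
    (S.filter fun i => j ≤ i).card
      = (S.filter fun i => j ≤ i ∧ i < l).card + (S.filter fun i => l ≤ i).card := by
  have hsplit : (S.filter fun i => j ≤ i)
      = (S.filter fun i => j ≤ i ∧ i < l) ∪ (S.filter fun i => l ≤ i) := by
    ext a
    simp only [Finset.mem_filter, Finset.mem_union]
    constructor
    · rintro ⟨hS, hj⟩
      by_cases h : a < l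
      · exact Or.inl ⟨hS, hj, h⟩
      · exact Or.inr ⟨hS, by omega⟩
    · rintro (⟨hS, hj, hl⟩ | ⟨hS, hl⟩)
      · exact ⟨hS, hj⟩
      · exact ⟨hS, by omega⟩
  rw [hsplit, Finset.card_union_of_disjoint]
  rw [Finset.disjoint_left]
  intro a ha hb
  simp only [Finset.mem_filter] at ha hb
  omega

/-- number of descents at positions `≥ j` -/
def dcount {n : ℕ} (π : Equiv.Perm (Fin n)) (j : ℕ) : ℕ :=
  ((desSet π).filter fun i => j ≤ i).card

lemma dcount_zero {n : ℕ} (π : Equiv.Perm (Fin n)) : dcount π 0 = desNum π := by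
  rw [dcount, desNum, Finset.filter_true_of_mem fun i _ => Nat.zero_le i]

lemma dcount_le {n : ℕ} (π : Equiv.Perm (Fin n)) (j : ℕ) : dcount π j ≤ desNum π :=
  Finset.card_filter_le _ _

lemma dcount_mono {n : ℕ} (π : Equiv.Perm (Fin n)) {j l : ℕ} (hjl : j ≤ l) :
    dcount π l ≤ dcount π j :=
  Finset.card_le_card fun i hi => by
    simp only [Finset.mem_filter] at hi ⊢
    exact ⟨hi.1, le_trans hjl hi.2⟩

lemma mem_desSet_lt {n : ℕ} (π : Equiv.Perm (Fin n)) {i : ℕ} (hi : i ∈ desSet π) :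
    i < n - 1 := Finset.mem_range.1 (Finset.mem_filter.1 hi).1

lemma dcount_split {n : ℕ} (π : Equiv.Perm (Fin n)) {j l : ℕ} (hjl : j ≤ l) :
    dcount π j = ((desSet π).filter fun i => j ≤ i ∧ i < l).card + dcount π l :=
  count_split _ _ _ hjl

lemma dcount_succ {n : ℕ} (π : Equiv.Perm (Fin n)) (j : ℕ) :
    dcount π j = (if j ∈ desSet π then 1 else 0) + dcount π (j+1) := by
  rw [dcount_split π (Nat.le_succ j)]
  congr 1
  have : (desSet π).filter (fun i => j ≤ i ∧ i < j + 1) = (desSet π).filter (fun i => i = j) :=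
    Finset.filter_congr fun i _ => by omega
  rw [this, Finset.filter_eq']
  split <;> simp

lemma dcount_top {n : ℕ} (π : Equiv.Perm (Fin n)) (j : ℕ) :
    ((desSet π).filter fun i => j ≤ i ∧ i < n - 1).card = dcount π j := by
  rw [dcount]
  exact congrArg Finset.card <| Finset.filter_congr fun i hi => by
    have := mem_desSet_lt π hi
    constructor
    · rintro ⟨h1, _⟩; exact h1
    · intro h1; exact ⟨h1, this⟩

lemma maj_eq_sum {n : ℕ} (π : Equiv.Perm (Fin n)) :
    ∑ k : Fin n, dcount π (k : ℕ) = maj π := by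
  rw [Fin.sum_univ_eq_sum_range (fun k => dcount π k) n, maj]
  have h1 : ∀ k, dcount π k = ∑ i ∈ desSet π, if k ≤ i then 1 else 0 := by
    intro k; rw [dcount, Finset.card_filter]
  calc ∑ k ∈ Finset.range n, dcount π k
      = ∑ k ∈ Finset.range n, ∑ i ∈ desSet π, if k ≤ i then 1 else 0 :=
        Finset.sum_congr rfl fun k _ => h1 k
    _ = ∑ i ∈ desSet π, ∑ k ∈ Finset.range n, if k ≤ i then 1 else 0 := Finset.sum_comm
    _ = ∑ i ∈ desSet π, (i + 1) := by
        refine Finset.sum_congr rfl fun i hi => ?_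
        have hlt := mem_desSet_lt π hi
        rw [← Finset.card_filter]
        have : (Finset.range n).filter (fun k => k ≤ i) = Finset.range (i+1) := by
          ext a
          simp only [Finset.mem_filter, Finset.mem_range]
          omega
        rw [this, Finset.card_range]

lemma chain {n r : ℕ} (π : Equiv.Perm (Fin n)) (v : Fin n → Fin r)
    (hmono : ∀ j l : Fin n, j ≤ l → v l ≤ v j)
    (hdes : ∀ j (hj : j ∈ desSet π),
      (v ⟨j + 1, by have := mem_desSet_lt π hj; omega⟩ : ℕ) <
        v ⟨j, by have := mem_desSet_lt π hj; omega⟩) :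
    ∀ j l : ℕ, ∀ hjl0 : j ≤ l, ∀ hl : l < n,
      (v ⟨l, hl⟩ : ℕ) + ((desSet π).filter fun i => j ≤ i ∧ i < l).card
        ≤ (v ⟨j, lt_of_le_of_lt hjl0 hl⟩ : ℕ) := by
  intro j l hjl
  induction l, hjl using Nat.le_induction with
  | base =>
    intro hl
    have he : (desSet π).filter (fun i => j ≤ i ∧ i < j) = ∅ :=
      Finset.filter_false_of_mem fun i _ => by omega
    rw [he]
    simp
  | succ l hjl ih =>
    intro hl
    have hln : l < n := by omega
    have ihl := ih hln
    rw [count_succ _ _ _ hjl]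
    by_cases hld : l ∈ desSet π
    · rw [if_pos hld]
      have hd : (v ⟨l + 1, hl⟩ : ℕ) < (v ⟨l, hln⟩ : ℕ) := hdes l hld
      omega
    · rw [if_neg hld, add_zero]
      have hm : v ⟨l+1, hl⟩ ≤ v ⟨l, hln⟩ := hmono ⟨l, hln⟩ ⟨l+1, hl⟩ (by
        rw [Fin.mk_le_mk]; omega)
      rw [Fin.le_def] at hm
      omega

lemma lb {n r s : ℕ} (π : Equiv.Perm (Fin n)) (v : Fin n → Fin r)
    (hs : ∀ j, s ≤ (v j : ℕ))
    (hmono : ∀ j l : Fin n, j ≤ l → v l ≤ v j)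
    (hdes : ∀ j (hj : j ∈ desSet π),
      (v ⟨j + 1, by have := mem_desSet_lt π hj; omega⟩ : ℕ) <
        v ⟨j, by have := mem_desSet_lt π hj; omega⟩)
    (k : Fin n) : s + dcount π (k : ℕ) ≤ (v k : ℕ) := by
  have hn : 0 < n := k.pos
  have hl : n - 1 < n := by omega
  have h := chain π v hmono hdes (k:ℕ) (n-1) (by have := k.isLt; omega) hl
  rw [dcount_top] at h
  simp only [Fin.eta] at h
  have hs' := hs ⟨n-1, hl⟩
  omega

lemma ub {n r s : ℕ} (π : Equiv.Perm (Fin n)) (v : Fin n → Fin r)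
    (hs : ∀ j, s ≤ (v j : ℕ))
    (hmono : ∀ j l : Fin n, j ≤ l → v l ≤ v j)
    (hdes : ∀ j (hj : j ∈ desSet π),
      (v ⟨j + 1, by have := mem_desSet_lt π hj; omega⟩ : ℕ) <
        v ⟨j, by have := mem_desSet_lt π hj; omega⟩)
    (k : Fin n) : (v k : ℕ) + desNum π ≤ (r - 1) + dcount π (k : ℕ) := by
  have h := chain π v hmono hdes 0 (k:ℕ) (Nat.zero_le (k:ℕ)) k.isLt
  simp only [Fin.eta] at h
  have hsplit := dcount_split π (Nat.zero_le (k:ℕ))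
  rw [dcount_zero] at hsplit
  have hlt := Fin.isLt (v ⟨0, lt_of_le_of_lt (Nat.zero_le (k:ℕ)) k.isLt⟩)
  omega

def toBox {n r : ℕ} (π : Equiv.Perm (Fin n)) (s m : ℕ) (v : Fin n → Fin r) :
    Fin n → Fin (m+1) :=
  fun k => ⟨min ((v k : ℕ) - s - dcount π (k : ℕ)) m, by omega⟩

def fromBox {n r : ℕ} (π : Equiv.Perm (Fin n)) (s m : ℕ) (hr : 0 < r)
    (w : Fin n → Fin (m+1)) : Fin n → Fin r :=
  fun k => ⟨min ((w k : ℕ) + s + dcount π (k : ℕ)) (r-1), by omega⟩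

@[simp] lemma toBox_val {n r : ℕ} (π : Equiv.Perm (Fin n)) (s m : ℕ) (v : Fin n → Fin r)
    (k : Fin n) : (toBox π s m v k : ℕ) = min ((v k : ℕ) - s - dcount π (k : ℕ)) m := rfl

@[simp] lemma fromBox_val {n r : ℕ} (π : Equiv.Perm (Fin n)) (s m : ℕ) (hr : 0 < r)
    (w : Fin n → Fin (m+1)) (k : Fin n) :
    (fromBox π s m hr w k : ℕ) = min ((w k : ℕ) + s + dcount π (k : ℕ)) (r-1) := rfl




open Classical in
theorem stmt4 (n r s : ℕ) (hrs : s < r) (π : Equiv.Perm (Fin n))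
    (q : ℝ) (hq0 : 0 < q) (hq1 : q < 1) :
    ∑ v ∈ Finset.univ.filter (fun v : Fin n → Fin r =>
        (∀ j, s ≤ (v j : ℕ)) ∧
        (∀ j l : Fin n, j ≤ l → v l ≤ v j) ∧
        (∀ j, ∀ hj : j ∈ desSet π,
          (v ⟨j + 1, by have := Finset.mem_range.1 (Finset.mem_filter.1 hj).1; omega⟩ : ℕ) <
            v ⟨j, by have := Finset.mem_range.1 (Finset.mem_filter.1 hj).1; omega⟩)),
      q ^ (∑ j, (v j : ℕ))
    = q ^ (s * n + maj π) * qPoch q (q ^ ((r : ℤ) - s - desNum π)) n / qPoch q q n := by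
  by_cases hc : desNum π + s < r
  · -- main case
    set m := r - s - 1 - desNum π with hm_def
    have hm : m + 1 + s + desNum π = r := by omega
    have hr : 0 < r := by omega
    have hz : (q : ℝ) ^ ((r : ℤ) - s - desNum π) = q ^ (m + 1) := by
      rw [show (r : ℤ) - s - desNum π = ((m + 1 : ℕ) : ℤ) by omega, zpow_natCast]
    have key : ∑ v ∈ Finset.univ.filter (fun v : Fin n → Fin r =>
        (∀ j, s ≤ (v j : ℕ)) ∧
        (∀ j l : Fin n, j ≤ l → v l ≤ v j) ∧
        (∀ j, ∀ hj : j ∈ desSet π,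
          (v ⟨j + 1, by have := Finset.mem_range.1 (Finset.mem_filter.1 hj).1; omega⟩ : ℕ) <
            v ⟨j, by have := Finset.mem_range.1 (Finset.mem_filter.1 hj).1; omega⟩)),
        q ^ (∑ j, (v j : ℕ)) = q ^ (s * n + maj π) * boxF q n m := by
      rw [boxF, Finset.mul_sum]
      refine Finset.sum_bij' (fun v _ => toBox π s m v) (fun w _ => fromBox π s m hr w)
        ?_ ?_ ?_ ?_ ?_
      · -- hi
        intro v hv
        simp only [Finset.mem_filter] at hv
        obtain ⟨-, hs, hmono, hdes⟩ := hv
        refine mem_boxSet.2 fun a b hab => ?_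
        rw [Fin.le_def, toBox_val, toBox_val]
        have hab' : (a : ℕ) ≤ (b : ℕ) := hab
        have hchain := chain π v hmono hdes (a:ℕ) (b:ℕ) hab' b.isLt
        simp only [Fin.eta] at hchain
        have hsplit := dcount_split π (l := (b:ℕ)) hab'
        have hlbb := lb π v hs hmono hdes b
        have huba := ub π v hs hmono hdes a
        have hubb := ub π v hs hmono hdes b
        omega
      · -- hj
        intro w hw
        have hw' := mem_boxSet.1 hw
        simp only [Finset.mem_filter]
        refine ⟨Finset.mem_univ _, ?_, ?_, ?_⟩
        · intro k
          rw [fromBox_val]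
          omega
        · intro a b hab
          rw [Fin.le_def, fromBox_val, fromBox_val]
          have h1 : (w b : ℕ) ≤ (w a : ℕ) := hw' a b hab
          have h2 := dcount_mono π (show (a:ℕ) ≤ (b:ℕ) from hab)
          omega
        · intro d hd
          have hd1 := mem_desSet_lt π hd
          have hsucc := dcount_succ π d
          rw [if_pos hd] at hsucc
          have hgoal : ∀ x y : Fin n, (x : ℕ) = d → (y : ℕ) = d + 1 →
              (fromBox π s m hr w y : ℕ) < (fromBox π s m hr w x : ℕ) := by
            intro x y hx hy
            rw [fromBox_val, fromBox_val, hx, hy]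
            have h1 : (w y : ℕ) ≤ (w x : ℕ) := hw' x y (by rw [Fin.le_def]; omega)
            have h2 := (w x).isLt
            have h3 := (w y).isLt
            have h4 := dcount_le π (d+1)
            have h5 := dcount_le π d
            omega
          exact hgoal _ _ rfl rfl
      · -- left_inv
        intro v hv
        simp only [Finset.mem_filter] at hv
        obtain ⟨-, hs, hmono, hdes⟩ := hv
        funext k
        apply Fin.ext
        rw [fromBox_val, toBox_val]
        have hlbk := lb π v hs hmono hdes k
        have hubk := ub π v hs hmono hdes k
        have := (v k).isLt
        omega
      · -- right_inv
        intro w hw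
        funext k
        apply Fin.ext
        rw [toBox_val, fromBox_val]
        have h2 := (w k).isLt
        have h3 := dcount_le π (k:ℕ)
        omega
      · -- weight
        intro v hv
        simp only [Finset.mem_filter] at hv
        obtain ⟨-, hs, hmono, hdes⟩ := hv
        rw [← pow_add]
        congr 1
        have hterm : ∀ j : Fin n, (v j : ℕ) = (s + dcount π (j:ℕ)) + (toBox π s m v j : ℕ) := by
          intro j
          rw [toBox_val]
          have hlbj := lb π v hs hmono hdes j
          have hubj := ub π v hs hmono hdes j
          have := (v j).isLt
          omega
        rw [Finset.sum_congr rfl fun j _ => hterm j, Finset.sum_add_distrib,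
          Finset.sum_add_distrib, maj_eq_sum, Finset.sum_const, Finset.card_univ,
          Fintype.card_fin, smul_eq_mul]
        ring
    rw [key, boxF_eq hq0 hq1 n m, hz]
    ring
  · -- degenerate case: both sides vanish
    have hd1 : 1 ≤ desNum π := by omega
    have hdn : desNum π ≤ n - 1 := by
      have := Finset.card_filter_le (Finset.range (n-1))
        (fun i => permVal π (i + 1) < permVal π i)
      rw [Finset.card_range] at this
      exact this
    have hn2 : 2 ≤ n := by omega
    have hempty : Finset.univ.filter (fun v : Fin n → Fin r =>
        (∀ j, s ≤ (v j : ℕ)) ∧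
        (∀ j l : Fin n, j ≤ l → v l ≤ v j) ∧
        (∀ j, ∀ hj : j ∈ desSet π,
          (v ⟨j + 1, by have := Finset.mem_range.1 (Finset.mem_filter.1 hj).1; omega⟩ : ℕ) <
            v ⟨j, by have := Finset.mem_range.1 (Finset.mem_filter.1 hj).1; omega⟩)) = ∅ := by
      refine Finset.eq_empty_of_forall_notMem fun v hv => ?_
      simp only [Finset.mem_filter] at hv
      obtain ⟨-, hs, hmono, hdes⟩ := hv
      have hk : (0:ℕ) < n := by omega
      have hlow := lb π v hs hmono hdes ⟨0, hk⟩
      have h0 : dcount π ((⟨0, hk⟩ : Fin n) : ℕ) = desNum π := dcount_zero π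
      have hlt := (v ⟨0, hk⟩).isLt
      omega
    rw [hempty, Finset.sum_empty]
    have hzero : qPoch q (q ^ ((r : ℤ) - s - desNum π)) n = 0 := by
      rw [qPoch]
      refine Finset.prod_eq_zero (Finset.mem_range.2
        (show desNum π + s - r < n by omega)) ?_
      have hqne : (q : ℝ) ≠ 0 := ne_of_gt hq0
      rw [← zpow_natCast q (desNum π + s - r), ← zpow_add₀ hqne]
      rw [show (r : ℤ) - s - desNum π + ((desNum π + s - r : ℕ) : ℤ) = 0 by omega]
      norm_num
    rw [hzero]
    simp
end

section
/- For every nonnegative integer n and any a, ∑_{π ∈ S_n} q^{maj(π)} (a q^{-des(π)};q)_n = (1-a)^n [n]_q!. -/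
open Finset Equiv

/-- insertion of the max value `n` at position `p` into the word of `σ`. -/
def ins {n : ℕ} (σ : Equiv.Perm (Fin n)) (p : Fin (n + 1)) : Equiv.Perm (Fin (n + 1)) :=
  (finSuccEquiv' p).trans ((Equiv.optionCongr σ).trans finSuccEquivLast.symm)

lemma ins_self {n : ℕ} (σ : Equiv.Perm (Fin n)) (p : Fin (n + 1)) :
    ins σ p p = Fin.last n := by
  simp only [ins, Equiv.trans_apply, finSuccEquiv'_at, optionCongr_apply, Option.map_none]
  rw [← finSuccEquivLast_last, Equiv.symm_apply_apply]

lemma ins_succAbove {n : ℕ} (σ : Equiv.Perm (Fin n)) (p : Fin (n + 1)) (j : Fin n) :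
    ins σ p (p.succAbove j) = (σ j).castSucc := by
  simp only [ins, Equiv.trans_apply, finSuccEquiv'_succAbove, optionCongr_apply, Option.map_some]
  rw [← finSuccEquivLast_castSucc, Equiv.symm_apply_apply]

lemma ins_injective {n : ℕ} :
    Function.Injective (fun x : Equiv.Perm (Fin n) × Fin (n + 1) => ins x.1 x.2) := by
  rintro ⟨σ, p⟩ ⟨σ', p'⟩ h
  simp only at h
  have hp : p = p' := by
    have h1 : ins σ' p' p = Fin.last n := by rw [← h]; exact ins_self σ p
    have h2 : ins σ' p' p' = Fin.last n := ins_self σ' p'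
    exact (ins σ' p').injective (h1.trans h2.symm)
  subst hp
  have hσ : σ = σ' := by
    ext j
    have := congrArg (fun e : Equiv.Perm (Fin (n+1)) => e (p.succAbove j)) h
    simp only [ins_succAbove] at this
    exact congrArg Fin.val (Fin.castSucc_injective n this)
  simp [hσ]

lemma ins_bijective {n : ℕ} :
    Function.Bijective (fun x : Equiv.Perm (Fin n) × Fin (n + 1) => ins x.1 x.2) := by
  rw [Fintype.bijective_iff_injective_and_card]
  refine ⟨ins_injective, ?_⟩
  simp [Fintype.card_perm, Nat.factorial_succ, mul_comm]

lemma permVal_lt {n : ℕ} (σ : Equiv.Perm (Fin n)) {i : ℕ} (h : i < n) : permVal σ i < n := by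
  simp only [permVal, dif_pos h]
  exact (σ ⟨i, h⟩).isLt

lemma pv_lt {n : ℕ} (σ : Equiv.Perm (Fin n)) (p : Fin (n + 1)) {i : ℕ} (h : i < (p : ℕ)) :
    permVal (ins σ p) i = permVal σ i := by
  have hin : i < n := by have := p.isLt; omega
  have hi1 : i < n + 1 := by omega
  have key : (⟨i, hi1⟩ : Fin (n + 1)) = p.succAbove ⟨i, hin⟩ := by
    rw [Fin.succAbove_of_castSucc_lt]
    · rfl
    · exact lt_of_lt_of_le (by exact_mod_cast h : (⟨i, hi1⟩ : Fin (n+1)) < p) le_rfl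
  simp only [permVal, dif_pos hi1, dif_pos hin, key, ins_succAbove, Fin.coe_castSucc]

lemma pv_eq {n : ℕ} (σ : Equiv.Perm (Fin n)) (p : Fin (n + 1)) :
    permVal (ins σ p) (p : ℕ) = n := by
  have h : ((p : ℕ)) < n + 1 := p.isLt
  simp only [permVal, dif_pos h]
  have : (⟨(p : ℕ), h⟩ : Fin (n + 1)) = p := rfl
  rw [this, ins_self]
  rfl

lemma pv_gt {n : ℕ} (σ : Equiv.Perm (Fin n)) (p : Fin (n + 1)) {i : ℕ}
    (h : (p : ℕ) < i) (h2 : i < n + 1) :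
    permVal (ins σ p) i = permVal σ (i - 1) := by
  have hin : i - 1 < n := by omega
  have key : (⟨i, h2⟩ : Fin (n + 1)) = p.succAbove ⟨i - 1, hin⟩ := by
    rw [Fin.succAbove_of_le_castSucc]
    · ext; simp [Fin.val_succ]; omega
    · rw [Fin.le_def]; simp; omega
  simp only [permVal, dif_pos h2, dif_pos hin, key, ins_succAbove, Fin.coe_castSucc]

lemma mem_desSet {n : ℕ} {σ : Equiv.Perm (Fin n)} {i : ℕ} :
    i ∈ desSet σ ↔ i < n - 1 ∧ permVal σ (i + 1) < permVal σ i := by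
  simp [desSet]

lemma desSet_bound {n : ℕ} {σ : Equiv.Perm (Fin n)} {i : ℕ} (h : i ∈ desSet σ) : i + 1 < n := by
  have := (mem_desSet.1 h).1; omega

/-- the master description of the descent set of `ins σ p`. -/
lemma desSet_ins {n : ℕ} (σ : Equiv.Perm (Fin n)) (p : Fin (n + 1)) :
    desSet (ins σ p) =
      ((desSet σ).filter (fun i => i + 1 < (p : ℕ))) ∪
      (((desSet σ).filter (fun i => (p : ℕ) ≤ i)).image (· + 1)) ∪
      (if (p : ℕ) < n then {(p : ℕ)} else ∅) := by
  have hp : (p : ℕ) < n + 1 := p.isLt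
  ext i
  simp only [mem_union, mem_filter, mem_image, mem_desSet]
  rw [show (n + 1 - 1) = n from rfl]
  constructor
  · rintro ⟨hin, hdes⟩
    rcases Nat.lt_trichotomy (i + 1) (p : ℕ) with h1 | h1 | h1
    · left; left
      rw [pv_lt σ p (i := i + 1) h1, pv_lt σ p (i := i) (by omega)] at hdes
      exact ⟨⟨by omega, hdes⟩, h1⟩
    · exfalso
      rw [h1, pv_eq, pv_lt σ p (i := i) (by omega)] at hdes
      have : permVal σ i < n := permVal_lt σ (by omega)
      omega
    · -- i + 1 > p, so i ≥ p
      rcases Nat.eq_or_lt_of_le (by omega : (p : ℕ) ≤ i) with h2 | h2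
      · right
        rw [if_pos (by omega : (p : ℕ) < n)]
        simp [← h2]
      · left; right
        rw [pv_gt σ p (i := i) h2 (by omega), pv_gt σ p (i := i + 1) (by omega) (by omega)] at hdes
        refine ⟨i - 1, ⟨⟨by omega, ?_⟩, by omega⟩, by omega⟩
        rw [show i - 1 + 1 = i from by omega]
        exact hdes
  · rintro ((⟨⟨hi1, hdes⟩, h1⟩ | ⟨j, ⟨⟨hj1, hdes⟩, hj2⟩, hj3⟩) | h3)
    · refine ⟨by omega, ?_⟩
      rw [pv_lt σ p (i := i + 1) h1, pv_lt σ p (i := i) (by omega)]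
      exact hdes
    · subst hj3
      refine ⟨by omega, ?_⟩
      rw [pv_gt σ p (i := j + 1 + 1) (by omega) (by omega), pv_gt σ p (i := j + 1) (by omega) (by omega)]
      simpa using hdes
    · by_cases hpn : (p : ℕ) < n
      · rw [if_pos hpn, mem_singleton] at h3
        subst h3
        refine ⟨hpn, ?_⟩
        rw [pv_eq, pv_gt σ p (i := (p : ℕ) + 1) (by omega) (by omega),
          show (p : ℕ) + 1 - 1 = (p : ℕ) from rfl]
        exact permVal_lt σ hpn
      · rw [if_neg hpn] at h3; exact absurd h3 (notMem_empty _)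

lemma tri_split {M : Type*} [AddCommMonoid M] (D : Finset ℕ) (P : ℕ) (f : ℕ → M) :
    ∑ i ∈ D, f i = ∑ i ∈ D.filter (fun i => i + 1 < P), f i +
      (∑ i ∈ D.filter (fun i => i + 1 = P), f i + ∑ i ∈ D.filter (fun i => P ≤ i), f i) := by
  rw [← Finset.sum_filter_add_sum_filter_not D (fun i => i + 1 < P) f]
  congr 1
  have h1 : D.filter (fun i => ¬ (i + 1 < P)) =
      D.filter (fun i => i + 1 = P) ∪ D.filter (fun i => P ≤ i) := by
    ext i
    simp only [mem_filter, mem_union]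
    constructor
    · rintro ⟨hi, h⟩
      by_cases h2 : i + 1 = P
      · exact Or.inl ⟨hi, h2⟩
      · exact Or.inr ⟨hi, by omega⟩
    · rintro (⟨hi, h⟩ | ⟨hi, h⟩) <;> exact ⟨hi, by omega⟩
  rw [h1, Finset.sum_union]
  rw [Finset.disjoint_left]
  intro a ha hb
  simp only [mem_filter] at ha hb
  omega

lemma tri_split_card (D : Finset ℕ) (P : ℕ) :
    D.card = (D.filter (fun i => i + 1 < P)).card +
      ((D.filter (fun i => i + 1 = P)).card + (D.filter (fun i => P ≤ i)).card) := by
  simp only [Finset.card_eq_sum_ones]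
  exact tri_split D P (fun _ => 1)

lemma stats_ins_last {n : ℕ} (σ : Equiv.Perm (Fin n)) (p : Fin (n + 1)) (h : (p : ℕ) = n) :
    maj (ins σ p) = maj σ ∧ desNum (ins σ p) = desNum σ := by
  have e0 : desSet (ins σ p) = desSet σ := by
    rw [desSet_ins, h]
    have e1 : (desSet σ).filter (fun i => i + 1 < n) = desSet σ :=
      Finset.filter_true_of_mem (fun i hi => desSet_bound hi)
    have e2 : (desSet σ).filter (fun i => n ≤ i) = ∅ :=
      Finset.filter_false_of_mem (fun i hi => by have := desSet_bound hi; omega)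
    rw [e1, e2, if_neg (lt_irrefl n)]
    simp
  exact ⟨by rw [maj, e0, ← maj], by rw [desNum, e0, ← desNum]⟩

lemma stats_ins_mid {n : ℕ} (σ : Equiv.Perm (Fin n)) (p : Fin (n + 1)) (hpn : (p : ℕ) < n) :
    maj (ins σ p) = ∑ i ∈ (desSet σ).filter (fun i => i + 1 < (p : ℕ)), (i + 1) +
        ((∑ i ∈ (desSet σ).filter (fun i => (p : ℕ) ≤ i), (i + 1)) +
          ((desSet σ).filter (fun i => (p : ℕ) ≤ i)).card) + ((p : ℕ) + 1) ∧
      desNum (ins σ p) = ((desSet σ).filter (fun i => i + 1 < (p : ℕ))).card +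
        ((desSet σ).filter (fun i => (p : ℕ) ≤ i)).card + 1 := by
  have hd2 : Disjoint ((desSet σ).filter (fun i => i + 1 < (p : ℕ)))
      (((desSet σ).filter (fun i => (p : ℕ) ≤ i)).image (· + 1)) := by
    rw [Finset.disjoint_left]
    intro a ha hb
    simp only [mem_filter, mem_image] at ha hb
    obtain ⟨j, ⟨_, hj⟩, hj2⟩ := hb
    omega
  have hd1 : Disjoint ((desSet σ).filter (fun i => i + 1 < (p : ℕ)) ∪
      ((desSet σ).filter (fun i => (p : ℕ) ≤ i)).image (· + 1)) ({(p : ℕ)} : Finset ℕ) := by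
    rw [Finset.disjoint_right]
    intro a ha hb
    simp only [mem_singleton] at ha
    subst ha
    simp only [mem_union, mem_filter, mem_image] at hb
    rcases hb with ⟨_, h⟩ | ⟨j, ⟨_, hj⟩, hj2⟩ <;> omega
  have hinj : ∀ x ∈ (desSet σ).filter (fun i => (p : ℕ) ≤ i),
      ∀ y ∈ (desSet σ).filter (fun i => (p : ℕ) ≤ i), x + 1 = y + 1 → x = y :=
    fun x _ y _ h => by omega
  constructor
  · rw [maj, desSet_ins, if_pos hpn, Finset.sum_union hd1, Finset.sum_union hd2,
      Finset.sum_image hinj, Finset.sum_singleton]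
    have : ∑ i ∈ (desSet σ).filter (fun i => (p : ℕ) ≤ i), (i + 1 + 1) =
        (∑ i ∈ (desSet σ).filter (fun i => (p : ℕ) ≤ i), (i + 1)) +
          ((desSet σ).filter (fun i => (p : ℕ) ≤ i)).card := by
      rw [Finset.sum_add_distrib, Finset.sum_const, smul_eq_mul, mul_one]
    rw [this]
  · rw [desNum, desSet_ins, if_pos hpn, Finset.card_union_of_disjoint hd1,
      Finset.card_union_of_disjoint hd2, Finset.card_image_of_injOn hinj,
      Finset.card_singleton]

lemma stats_mem {n : ℕ} (σ : Equiv.Perm (Fin n)) (p : Fin (n + 1))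
    (h : (p : ℕ) ∈ (desSet σ).image (· + 1)) :
    maj (ins σ p) = maj σ + ((desSet σ).filter (fun i => (p : ℕ) ≤ i)).card + 1 ∧
      desNum (ins σ p) = desNum σ := by
  obtain ⟨i0, hi0, hP⟩ := Finset.mem_image.1 h
  have hpn : (p : ℕ) < n := by have := desSet_bound hi0; omega
  have hB : (desSet σ).filter (fun i => i + 1 = (p : ℕ)) = {i0} := by
    ext i
    simp only [mem_filter, mem_singleton]
    constructor
    · rintro ⟨_, h2⟩; omega
    · rintro rfl; exact ⟨hi0, hP⟩
  obtain ⟨hm, hc⟩ := stats_ins_mid σ p hpn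
  have hsm := tri_split (desSet σ) (p : ℕ) (fun i => i + 1)
  have hsc := tri_split_card (desSet σ) (p : ℕ)
  rw [hB, Finset.sum_singleton] at hsm
  rw [hB, Finset.card_singleton] at hsc
  rw [← maj] at hsm
  rw [← desNum] at hsc
  constructor
  · rw [hm]; omega
  · rw [hc]; omega

lemma stats_notmem {n : ℕ} (σ : Equiv.Perm (Fin n)) (p : Fin (n + 1))
    (hpn : (p : ℕ) < n) (h : (p : ℕ) ∉ (desSet σ).image (· + 1)) :
    maj (ins σ p) = maj σ + ((desSet σ).filter (fun i => (p : ℕ) ≤ i)).card + (p : ℕ) + 1 ∧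
      desNum (ins σ p) = desNum σ + 1 := by
  have hB : (desSet σ).filter (fun i => i + 1 = (p : ℕ)) = ∅ := by
    apply Finset.filter_false_of_mem
    intro i hi hcon
    exact h (Finset.mem_image.2 ⟨i, hi, hcon⟩)
  obtain ⟨hm, hc⟩ := stats_ins_mid σ p hpn
  have hsm := tri_split (desSet σ) (p : ℕ) (fun i => i + 1)
  have hsc := tri_split_card (desSet σ) (p : ℕ)
  rw [hB, Finset.sum_empty] at hsm
  rw [hB, Finset.card_empty] at hsc
  rw [← maj] at hsm
  rw [← desNum] at hsc
  constructor
  · rw [hm]; omega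
  · rw [hc]; omega

lemma lemB (q : ℝ) (D : Finset ℕ) :
    ∑ i ∈ D, q ^ (1 + (D.filter (fun j => i < j)).card) =
      ∑ j ∈ Finset.range D.card, q ^ (j + 1) := by
  induction D using Finset.induction_on_min with
  | empty => simp
  | insert a s ha ih =>
    have hans : a ∉ s := fun h => lt_irrefl a (ha a h)
    rw [Finset.sum_insert hans, Finset.card_insert_of_notMem hans, Finset.sum_range_succ]
    have e1 : (insert a s).filter (fun j => a < j) = s := by
      rw [Finset.filter_insert, if_neg (lt_irrefl a), Finset.filter_true_of_mem ha]
    have e2 : ∀ i ∈ s, (insert a s).filter (fun j => i < j) = s.filter (fun j => i < j) := by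
      intro i hi
      rw [Finset.filter_insert, if_neg (by have := ha i hi; omega)]
    rw [e1]
    have e3 : ∑ i ∈ s, q ^ (1 + ((insert a s).filter (fun j => i < j)).card) =
        ∑ i ∈ s, q ^ (1 + (s.filter (fun j => i < j)).card) :=
      Finset.sum_congr rfl (fun i hi => by rw [e2 i hi])
    rw [e3, ih]
    ring

lemma lemC (q : ℝ) (n : ℕ) (D : Finset ℕ) (hD : ∀ i ∈ D, i + 1 < n) :
    ∑ P ∈ (Finset.range n).filter (fun P => P ∉ D.image (· + 1)),
        q ^ (P + 1 + (D.filter (fun j => P ≤ j)).card) =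
      ∑ j ∈ Finset.Icc (D.card + 1) n, q ^ j := by
  set S := (Finset.range n).filter (fun P => P ∉ D.image (· + 1)) with hS
  set f : ℕ → ℕ := fun P => P + 1 + (D.filter (fun j => P ≤ j)).card with hf
  have hmono : ∀ P ∈ S, ∀ P' ∈ S, P < P' → f P < f P' := by
    intro P hP P' hP' hlt
    have hP'img : ∀ j ∈ D, j + 1 ≠ P' := by
      intro j hj hcon
      rw [hS, Finset.mem_filter] at hP'
      exact hP'.2 (Finset.mem_image.2 ⟨j, hj, hcon⟩)
    have hsplit : D.filter (fun j => P ≤ j) =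
        D.filter (fun j => P' ≤ j) ∪ D.filter (fun j => P ≤ j ∧ j < P') := by
      ext j
      simp only [Finset.mem_filter, Finset.mem_union]
      constructor
      · rintro ⟨hj, h⟩
        by_cases h2 : P' ≤ j
        · exact Or.inl ⟨hj, h2⟩
        · exact Or.inr ⟨hj, h, by omega⟩
      · rintro (⟨hj, h⟩ | ⟨hj, h, h2⟩) <;> exact ⟨hj, by omega⟩
    have hcard : (D.filter (fun j => P ≤ j)).card ≤
        (D.filter (fun j => P' ≤ j)).card + (D.filter (fun j => P ≤ j ∧ j < P')).card := by
      rw [hsplit]; exact Finset.card_union_le _ _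
    have hbound : (D.filter (fun j => P ≤ j ∧ j < P')).card ≤ P' - 1 - P := by
      have hsub : D.filter (fun j => P ≤ j ∧ j < P') ⊆ Finset.Ico P (P' - 1) := by
        intro j hj
        rw [Finset.mem_filter] at hj
        obtain ⟨hj, h1, h2⟩ := hj
        have := hP'img j hj
        rw [Finset.mem_Ico]
        omega
      calc (D.filter (fun j => P ≤ j ∧ j < P')).card ≤ (Finset.Ico P (P' - 1)).card :=
            Finset.card_le_card hsub
        _ = P' - 1 - P := Nat.card_Ico _ _
    simp only [hf]
    omega
  have hinj : ∀ P ∈ S, ∀ P' ∈ S, f P = f P' → P = P' := by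
    intro P hP P' hP' hfe
    rcases Nat.lt_trichotomy P P' with h | h | h
    · exact absurd hfe (Nat.ne_of_lt (hmono P hP P' hP' h))
    · exact h
    · exact absurd hfe.symm (Nat.ne_of_lt (hmono P' hP' P hP h))
  have himg : S.image f ⊆ Finset.Icc (D.card + 1) n := by
    intro v hv
    obtain ⟨P, hP, rfl⟩ := Finset.mem_image.1 hv
    rw [hS, Finset.mem_filter, Finset.mem_range] at hP
    obtain ⟨hPn, _⟩ := hP
    rw [Finset.mem_Icc]
    constructor
    · have h1 : (D.filter (fun j => ¬ P ≤ j)).card ≤ P := by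
        calc (D.filter (fun j => ¬ P ≤ j)).card ≤ (Finset.range P).card :=
              Finset.card_le_card (fun j hj => by
                rw [Finset.mem_filter] at hj; rw [Finset.mem_range]; omega)
          _ = P := Finset.card_range P
      have h2 := Finset.card_filter_add_card_filter_not (s := D) (p := fun j => P ≤ j)
      simp only [hf]
      omega
    · have h1 : (D.filter (fun j => P ≤ j)).card ≤ (Finset.Ico P (n - 1)).card := by
        apply Finset.card_le_card
        intro j hj
        rw [Finset.mem_filter] at hj
        have := hD j hj.1
        rw [Finset.mem_Ico]
        omega
      rw [Nat.card_Ico] at h1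
      simp only [hf]
      omega
  have hScard : S.card = n - D.card := by
    rw [hS, ← Finset.sdiff_eq_filter]
    rw [Finset.card_sdiff_of_subset (by
      intro v hv
      obtain ⟨j, hj, rfl⟩ := Finset.mem_image.1 hv
      rw [Finset.mem_range]
      exact hD j hj)]
    rw [Finset.card_image_of_injOn (fun x _ y _ h => by omega), Finset.card_range]
  have himgeq : S.image f = Finset.Icc (D.card + 1) n := by
    apply Finset.eq_of_subset_of_card_le himg
    rw [Nat.card_Icc, Finset.card_image_of_injOn hinj, hScard]
    omega
  rw [← himgeq, Finset.sum_image hinj]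

lemma alg (n d : ℕ) (hdn : d ≤ n) (q a : ℝ) (hq0 : q ≠ 0) (hq1 : q ≠ 1) :
    qPoch q (a * q ^ (-(d : ℤ))) (n + 1) * (1 + ∑ j ∈ Finset.range d, q ^ (j + 1)) +
      qPoch q (a * q ^ (-((d : ℤ) + 1))) (n + 1) * (∑ j ∈ Finset.Icc (d + 1) n, q ^ j) =
      (1 - a) * qNum q (n + 1) * qPoch q (a * q ^ (-(d : ℤ))) n := by
  have hq1' : q - 1 ≠ 0 := sub_ne_zero.2 hq1
  have hq1'' : (1 : ℝ) - q ≠ 0 := fun h => hq1' (by linarith [h])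
  -- geometric sums
  have hg1 : 1 + ∑ j ∈ Finset.range d, q ^ (j + 1) = (q ^ (d + 1) - 1) / (q - 1) := by
    rw [← geom_sum_eq hq1 (d + 1), Finset.sum_range_succ' (fun j => q ^ j) d]
    simp [add_comm]
  have hg2 : ∑ j ∈ Finset.Icc (d + 1) n, q ^ j = (q ^ (n + 1) - q ^ (d + 1)) / (q - 1) := by
    rw [← Finset.Ico_add_one_right_eq_Icc, geom_sum_Ico hq1 (by omega)]
  -- Pochhammer expansions
  have hp1 : qPoch q (a * q ^ (-(d : ℤ))) (n + 1) =
      qPoch q (a * q ^ (-(d : ℤ))) n * (1 - a * q ^ (n - d)) := by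
    rw [qPoch, Finset.prod_range_succ, ← qPoch]
    congr 2
    rw [mul_assoc]
    congr 1
    rw [← zpow_natCast q (n - d), ← zpow_natCast q n, ← zpow_add₀ hq0]
    congr 1
    omega
  have hp2 : qPoch q (a * q ^ (-((d : ℤ) + 1))) (n + 1) =
      (1 - a * q ^ (-((d : ℤ) + 1))) * qPoch q (a * q ^ (-(d : ℤ))) n := by
    rw [qPoch, Finset.prod_range_succ' (fun k => 1 - a * q ^ (-((d : ℤ) + 1)) * q ^ k) n]
    simp only [pow_zero, mul_one]
    rw [mul_comm]
    congr 1
    rw [qPoch]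
    apply Finset.prod_congr rfl
    intro k _
    have hkey : q ^ (-((d : ℤ) + 1)) * q ^ (k + 1) = q ^ (-(d : ℤ)) * q ^ k := by
      rw [← zpow_natCast q (k + 1), ← zpow_natCast q k, ← zpow_add₀ hq0, ← zpow_add₀ hq0]
      congr 1
      push_cast
      ring
    rw [mul_assoc, mul_assoc, hkey]
  have hinv : q ^ (-((d : ℤ) + 1)) = (q ^ (d + 1))⁻¹ := by
    rw [← zpow_natCast q (d + 1), ← zpow_neg]
    congr 1
  have hrel : q ^ (n + 1) = q ^ (n - d) * q ^ (d + 1) := by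
    rw [← pow_add]
    congr 1
    omega
  have hpow : (q : ℝ) ^ (d + 1) ≠ 0 := pow_ne_zero _ hq0
  rw [hg1, hg2, hp1, hp2, qNum, hinv, hrel]
  field_simp
  ring

lemma desNum_le {n : ℕ} (σ : Equiv.Perm (Fin n)) : desNum σ ≤ n := by
  have : (desSet σ).card ≤ (Finset.range (n - 1)).card :=
    Finset.card_le_card (Finset.filter_subset _ _)
  rw [Finset.card_range] at this
  rw [desNum]
  omega

lemma key {n : ℕ} (σ : Equiv.Perm (Fin n)) (q a : ℝ) (hq0 : q ≠ 0) (hq1 : q ≠ 1) :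
    ∑ p : Fin (n + 1), q ^ maj (ins σ p) * qPoch q (a * q ^ (-(desNum (ins σ p) : ℤ))) (n + 1) =
      (1 - a) * qNum q (n + 1) * (q ^ maj σ * qPoch q (a * q ^ (-(desNum σ : ℤ))) n) := by
  set D := desSet σ with hD
  set d := desNum σ with hd
  set P1 : ℝ := qPoch q (a * q ^ (-(d : ℤ))) (n + 1) with hP1
  set P2 : ℝ := qPoch q (a * q ^ (-((d : ℤ) + 1))) (n + 1) with hP2
  set H : ℕ → ℝ := fun P =>
    if P = n then q ^ maj σ * P1
    else if P ∈ D.image (· + 1) then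
      q ^ (maj σ + (D.filter (fun j => P ≤ j)).card + 1) * P1
    else q ^ (maj σ + (D.filter (fun j => P ≤ j)).card + P + 1) * P2 with hH
  have step1 : ∀ p : Fin (n + 1),
      q ^ maj (ins σ p) * qPoch q (a * q ^ (-(desNum (ins σ p) : ℤ))) (n + 1) = H (p : ℕ) := by
    intro p
    by_cases hpn : (p : ℕ) = n
    · obtain ⟨hm, hc⟩ := stats_ins_last σ p hpn
      rw [hH]
      simp only [if_pos hpn]
      rw [hm, hc, ← hd, ← hP1]
    · have hplt : (p : ℕ) < n := by have := p.isLt; omega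
      by_cases himg : (p : ℕ) ∈ D.image (· + 1)
      · obtain ⟨hm, hc⟩ := stats_mem σ p himg
        rw [hH]
        simp only [if_neg hpn, if_pos himg]
        rw [hm, hc, ← hd, ← hD, ← hP1]
      · obtain ⟨hm, hc⟩ := stats_notmem σ p hplt himg
        rw [hH]
        simp only [if_neg hpn, if_neg himg]
        rw [hm, hc, ← hd, ← hD]
        have hcast : (-((d + 1 : ℕ) : ℤ)) = -((d : ℤ) + 1) := by push_cast; ring
        rw [hcast, ← hP2]
  rw [Finset.sum_congr rfl (fun p _ => step1 p), Fin.sum_univ_eq_sum_range H (n + 1),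
    Finset.sum_range_succ]
  have hHn : H n = q ^ maj σ * P1 := by rw [hH]; simp
  have himsub : D.image (· + 1) ⊆ Finset.range n := by
    intro v hv
    obtain ⟨j, hj, rfl⟩ := Finset.mem_image.1 hv
    rw [Finset.mem_range]
    exact desSet_bound hj
  rw [← Finset.sum_filter_add_sum_filter_not (Finset.range n) (fun P => P ∈ D.image (· + 1)) H]
  have hfilt : (Finset.range n).filter (fun P => P ∈ D.image (· + 1)) = D.image (· + 1) := by
    rw [Finset.filter_mem_eq_inter]
    exact Finset.inter_eq_right.mpr himsub
  have hinj : ∀ x ∈ D, ∀ y ∈ D, x + 1 = y + 1 → x = y := fun x _ y _ h => by omega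
  have hsum1 : ∑ P ∈ (Finset.range n).filter (fun P => P ∈ D.image (· + 1)), H P =
      (q ^ maj σ * P1) * ∑ j ∈ Finset.range d, q ^ (j + 1) := by
    rw [hfilt, Finset.sum_image hinj]
    have : ∀ j ∈ D, H (j + 1) = (q ^ maj σ * P1) * q ^ (1 + (D.filter (fun x => j < x)).card) := by
      intro j hj
      have hne : j + 1 ≠ n := by have := desSet_bound hj; omega
      have hmem : j + 1 ∈ D.image (· + 1) := Finset.mem_image.2 ⟨j, hj, rfl⟩
      rw [hH]
      simp only [if_neg hne, if_pos hmem]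
      have hfc : D.filter (fun x => j + 1 ≤ x) = D.filter (fun x => j < x) := rfl
      rw [hfc, show maj σ + (D.filter (fun x => j < x)).card + 1 =
        maj σ + (1 + (D.filter (fun x => j < x)).card) from by omega, pow_add]
      ring
    rw [Finset.sum_congr rfl this, ← Finset.mul_sum]
    congr 1
    rw [hd, desNum, ← hD]
    exact lemB q D
  have hsum2 : ∑ P ∈ (Finset.range n).filter (fun P => ¬ P ∈ D.image (· + 1)), H P =
      (q ^ maj σ * P2) * ∑ j ∈ Finset.Icc (d + 1) n, q ^ j := by
    have : ∀ P ∈ (Finset.range n).filter (fun P => ¬ P ∈ D.image (· + 1)),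
        H P = (q ^ maj σ * P2) * q ^ (P + 1 + (D.filter (fun j => P ≤ j)).card) := by
      intro P hP
      rw [Finset.mem_filter, Finset.mem_range] at hP
      obtain ⟨hPn, hPim⟩ := hP
      rw [hH]
      simp only [if_neg (by omega : ¬ P = n), if_neg hPim]
      rw [show maj σ + (D.filter (fun j => P ≤ j)).card + P + 1 =
        maj σ + (P + 1 + (D.filter (fun j => P ≤ j)).card) from by omega, pow_add]
      ring
    rw [Finset.sum_congr rfl this, ← Finset.mul_sum]
    congr 1
    rw [hd, desNum, ← hD]
    exact lemC q n D (fun i hi => desSet_bound hi)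
  rw [hHn, hsum1, hsum2]
  have halg := alg n d (by rw [hd]; exact desNum_le σ) q a hq0 hq1
  rw [← hP1, ← hP2] at halg
  have hpoch : qPoch q (a * q ^ (-(desNum σ : ℤ))) n = qPoch q (a * q ^ (-(d : ℤ))) n := by
    rw [hd]
  rw [hpoch]
  calc (q ^ maj σ * P1) * ∑ j ∈ Finset.range d, q ^ (j + 1) +
        (q ^ maj σ * P2) * ∑ j ∈ Finset.Icc (d + 1) n, q ^ j + q ^ maj σ * P1
      = q ^ maj σ * (P1 * (1 + ∑ j ∈ Finset.range d, q ^ (j + 1)) +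
          P2 * ∑ j ∈ Finset.Icc (d + 1) n, q ^ j) := by ring
    _ = q ^ maj σ * ((1 - a) * qNum q (n + 1) * qPoch q (a * q ^ (-(d : ℤ))) n) := by rw [halg]
    _ = (1 - a) * qNum q (n + 1) * (q ^ maj σ * qPoch q (a * q ^ (-(d : ℤ))) n) := by ring


/-- `∑_{π ∈ S_n} q^{maj π} (a q^{-des π}; q)_n = (1-a)^n [n]_q!`. -/
theorem stmt7 (n : ℕ) (q a : ℝ) (hq0 : q ≠ 0) (hq1 : q ≠ 1) :
    ∑ π : Equiv.Perm (Fin n), q ^ maj π * qPoch q (a * q ^ (-(desNum π : ℤ))) n =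
      (1 - a) ^ n * qFact q n := by
  induction n with
  | zero =>
    rw [Fintype.sum_subsingleton _ 1]
    simp [maj, desSet, desNum, qPoch, qFact]
  | succ n ih =>
    rw [← Fintype.sum_bijective (fun x : Equiv.Perm (Fin n) × Fin (n + 1) => ins x.1 x.2)
      ins_bijective
      (fun x => q ^ maj (ins x.1 x.2) * qPoch q (a * q ^ (-(desNum (ins x.1 x.2) : ℤ))) (n + 1))
      _ (fun x => rfl)]
    rw [Fintype.sum_prod_type]
    rw [Finset.sum_congr rfl (fun σ _ => key σ q a hq0 hq1)]
    rw [← Finset.mul_sum, ih]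
    have hqf : qFact q (n + 1) = qFact q n * qNum q (n + 1) := Finset.prod_range_succ _ n
    rw [hqf]
    ring
end

section
/- Carlitz's formula: ∑_{π ∈ S_n} t^{des(π)} q^{maj(π)} = (t;q)_{n+1} · ∑_{i≥0} [i+1]_q^n t^i, as an identity of formal power series in t with coefficients polynomial in q. -/
namespace CarlitzAux

open Finset PowerSeries

/-- Number of descents of `π` at positions `≥ k`. -/
def dcount {n : ℕ} (π : Equiv.Perm (Fin n)) (k : ℕ) : ℕ :=
  ((desSet π).filter (fun j => k ≤ j)).card

/-- Antitone functions `Fin n → {0, …, m}`. -/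
def antFuns (n m : ℕ) : Finset (Fin n → ℕ) :=
  (Fintype.piFinset fun _ => Finset.range (m+1)).filter
    (fun g => ∀ a b : Fin n, a ≤ b → g b ≤ g a)

/-- Generating function of partitions in an `n × m` box. -/
noncomputable def K (q : ℝ) (n m : ℕ) : ℝ := ∑ g ∈ antFuns n m, q ^ (∑ j, g j)

/-- `f` is `π`-compatible: `f∘π` is weakly decreasing and ties have increasing `π`-values. -/
def Compat {n : ℕ} (π : Equiv.Perm (Fin n)) (f : Fin n → ℕ) : Prop :=
  (∀ a b : Fin n, a ≤ b → f (π b) ≤ f (π a)) ∧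
  (∀ a b : Fin n, a < b → f (π a) = f (π b) → π a < π b)

variable {n : ℕ} {π : Equiv.Perm (Fin n)} {f : Fin n → ℕ}

lemma mem_desSet_dest {k : ℕ} (h : k ∈ desSet π) : k + 1 < n := by
  have := (Finset.mem_filter.1 h).1
  rw [Finset.mem_range] at this
  omega

lemma mem_desSet {k : ℕ} (hk : k + 1 < n) :
    k ∈ desSet π ↔ (π ⟨k+1, hk⟩ : ℕ) < (π ⟨k, by omega⟩ : ℕ) := by
  unfold desSet permVal
  rw [Finset.mem_filter, Finset.mem_range, dif_pos hk, dif_pos (show k < n by omega)]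
  constructor
  · exact fun h => h.2
  · exact fun h => ⟨by omega, h⟩

lemma dcount_zero : dcount π 0 = desNum π := by
  unfold dcount desNum
  rw [Finset.filter_true_of_mem (fun x _ => Nat.zero_le x)]

lemma dcount_succ (k : ℕ) :
    dcount π k = dcount π (k+1) + (if k ∈ desSet π then 1 else 0) := by
  unfold dcount
  have hsplit : (desSet π).filter (fun j => k ≤ j)
      = ((desSet π).filter (fun j => k+1 ≤ j)) ∪ ((desSet π).filter (fun j => j = k)) := by
    ext x; simp only [Finset.mem_union, Finset.mem_filter]; constructor
    · rintro ⟨hx, h⟩; rcases Nat.eq_or_lt_of_le h with h | h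
      · exact Or.inr ⟨hx, h.symm⟩
      · exact Or.inl ⟨hx, h⟩
    · rintro (⟨hx, h⟩ | ⟨hx, h⟩) <;> exact ⟨hx, by omega⟩
  rw [hsplit, Finset.card_union_of_disjoint]
  · congr 1
    rw [Finset.filter_eq']
    split <;> simp
  · rw [Finset.disjoint_left]; intro x hx hy
    simp only [Finset.mem_filter] at hx hy; omega

lemma dcount_mono {a b : ℕ} (h : a ≤ b) : dcount π b ≤ dcount π a := by
  apply Finset.card_le_card
  intro x hx
  rw [Finset.mem_filter] at hx ⊢
  exact ⟨hx.1, le_trans h hx.2⟩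

lemma dcount_last {k : ℕ} (h : n - 1 ≤ k) : dcount π k = 0 := by
  rw [dcount, Finset.card_eq_zero, Finset.filter_eq_empty_iff]
  intro j hj
  have := mem_desSet_dest hj
  omega

lemma sum_dcount : ∑ k : Fin n, dcount π (k : ℕ) = maj π := by
  rw [Fin.sum_univ_eq_sum_range (fun k => dcount π k) n]
  have h1 : ∀ k, dcount π k = ∑ j ∈ desSet π, (if k ≤ j then 1 else 0) := by
    intro k; rw [dcount, Finset.card_filter]
  simp only [h1]
  rw [Finset.sum_comm]
  unfold maj
  apply Finset.sum_congr rfl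
  intro j hj
  have hjn := mem_desSet_dest hj
  calc ∑ k ∈ Finset.range n, (if k ≤ j then 1 else 0)
      = ((Finset.range n).filter (fun k => k ≤ j)).card := (Finset.card_filter _ _).symm
    _ = (Finset.range (j+1)).card := by
        congr 1; ext x; simp only [Finset.mem_filter, Finset.mem_range]; omega
    _ = j + 1 := Finset.card_range _

/-- If `dcount` agrees at `a ≤ b` then there is no descent in `[a, b)`. -/
lemma no_descent_between {a b m : ℕ} (hab : a ≤ b) (h : dcount π a = dcount π b)
    (h1 : a ≤ m) (h2 : m < b) : m ∉ desSet π := by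
  intro hm
  have e1 : dcount π m = dcount π (m+1) + 1 := by
    rw [dcount_succ m, if_pos hm]
  have e2 := dcount_mono (π := π) h1
  have e3 := dcount_mono (π := π) (show m + 1 ≤ b by omega)
  omega

lemma compat_step (hc : Compat π f) {k : ℕ} (hk : k + 1 < n) :
    f (π ⟨k+1, hk⟩) + (if k ∈ desSet π then 1 else 0) ≤ f (π ⟨k, by omega⟩) := by
  have hle : f (π ⟨k+1, hk⟩) ≤ f (π ⟨k, by omega⟩) :=
    hc.1 ⟨k, by omega⟩ ⟨k+1, hk⟩ (by simp [Fin.le_def])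
  split
  · rename_i hdes
    rw [mem_desSet hk] at hdes
    rcases Nat.eq_or_lt_of_le hle with he | hlt
    · exfalso
      have := hc.2 ⟨k, by omega⟩ ⟨k+1, hk⟩ (by simp [Fin.lt_def]) he.symm
      rw [Fin.lt_def] at this
      omega
    · omega
  · omega

lemma compat_chain (hc : Compat π f) :
    ∀ b (hb : b < n) a (ha : a ≤ b),
      f (π ⟨b, hb⟩) + dcount π a ≤ f (π ⟨a, lt_of_le_of_lt ha hb⟩) + dcount π b := by
  intro b
  induction b with
  | zero =>
    intro hb a ha
    have : a = 0 := by omega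
    subst this
    omega
  | succ b ih =>
    intro hb a ha
    rcases Nat.eq_or_lt_of_le ha with rfl | hab
    · omega
    · have hab' : a ≤ b := by omega
      have h1 := ih (by omega) a hab'
      have h2 := compat_step hc hb
      have h3 := dcount_succ (π := π) b
      omega

lemma compat_dcount_le (hc : Compat π f) {k : ℕ} (hk : k < n) :
    dcount π k ≤ f (π ⟨k, hk⟩) := by
  have h1 := compat_chain hc (n-1) (by omega) k (by omega)
  have h2 : dcount π (n-1) = 0 := dcount_last le_rfl
  omega

lemma compat_upper (hc : Compat π f) {i : ℕ} (hf : ∀ j, f j ≤ i) {k : ℕ} (hk : k < n) :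
    f (π ⟨k, hk⟩) + desNum π ≤ i + dcount π k := by
  have h1 := compat_chain hc k hk 0 (Nat.zero_le _)
  have h2 : dcount π 0 = desNum π := dcount_zero
  have h3 := hf (π ⟨0, by omega⟩)
  omega

lemma fiber_eq {i : ℕ} (hf : ∀ j, f j ≤ i) :
    Tuple.sort (fun j => i - f j) = π ↔ Compat π f := by
  rw [eq_comm, Tuple.eq_sort_iff]
  constructor
  · rintro ⟨h1, h2⟩
    constructor
    · intro a b hab
      have := h1 hab
      simp only [Function.comp_apply] at this
      have ha := hf (π a); have hb := hf (π b)
      omega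
    · intro a b hab he
      exact h2 a b hab (by omega)
  · rintro ⟨h1, h2⟩
    constructor
    · intro a b hab
      have := h1 a b hab
      simp only [Function.comp_apply]
      omega
    · intro a b hab he
      have ha := hf (π a); have hb := hf (π b)
      exact h2 a b hab (by omega)

lemma ascent_step {m : ℕ} (hm : m + 1 < n) (h : m ∉ desSet π) :
    (π ⟨m, by omega⟩ : ℕ) < π ⟨m+1, hm⟩ := by
  rw [mem_desSet hm] at h
  have hne : (π ⟨m, by omega⟩ : ℕ) ≠ (π ⟨m+1, hm⟩ : ℕ) := by
    intro he
    have h2 : (⟨m, by omega⟩ : Fin n) = ⟨m+1, hm⟩ := π.injective (Fin.val_injective he)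
    rw [Fin.mk.injEq] at h2
    omega
  omega

lemma ascent_chain {a b : Fin n} (hab : a < b)
    (h : ∀ m : ℕ, (a : ℕ) ≤ m → m < (b : ℕ) → m ∉ desSet π) : π a < π b := by
  have hbn : (b : ℕ) < n := b.isLt
  have key : ∀ d : ℕ, ∀ _hdd : (a : ℕ) + d + 1 ≤ (b : ℕ),
      (π a : ℕ) < π ⟨(a : ℕ) + d + 1, by omega⟩ := by
    intro d
    induction d with
    | zero =>
      intro hd
      have h0 := ascent_step (π := π) (m := (a : ℕ)) (by omega)
        (h (a : ℕ) le_rfl (by omega))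
      simpa using h0
    | succ d ih =>
      intro hd
      have h1 := ih (by omega)
      have h2 := ascent_step (π := π) (m := (a : ℕ) + d + 1) (by omega)
        (h ((a : ℕ) + d + 1) (by omega) (by omega))
      calc (π a : ℕ) < π ⟨(a : ℕ) + d + 1, by omega⟩ := h1
        _ < _ := h2
  have hd := key ((b : ℕ) - (a : ℕ) - 1) (by rw [Fin.lt_def] at hab; omega)
  rw [Fin.lt_def]
  have hb : (⟨(a : ℕ) + ((b : ℕ) - (a : ℕ) - 1) + 1, by omega⟩ : Fin n) = b := by
    apply Fin.ext
    simp only []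
    rw [Fin.lt_def] at hab
    omega
  rwa [hb] at hd

lemma backward_compat {m : ℕ} {g : Fin n → ℕ} (hg : g ∈ antFuns n m) :
    Compat π (fun j => g (π⁻¹ j) + dcount π ((π⁻¹ j : Fin n) : ℕ)) := by
  have hant : ∀ a b : Fin n, a ≤ b → g b ≤ g a := (Finset.mem_filter.1 hg).2
  constructor
  · intro a b hab
    simp only [Equiv.Perm.coe_inv, Equiv.symm_apply_apply]
    have h1 := hant a b hab
    have h2 : dcount π (b : ℕ) ≤ dcount π (a : ℕ) := dcount_mono hab
    omega
  · intro a b hab he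
    simp only [Equiv.Perm.coe_inv, Equiv.symm_apply_apply] at he
    have h1 := hant a b (le_of_lt hab)
    have h2 : dcount π (b : ℕ) ≤ dcount π (a : ℕ) := dcount_mono (le_of_lt hab)
    have h3 : dcount π (a : ℕ) = dcount π (b : ℕ) := by omega
    apply ascent_chain hab
    intro mm hm1 hm2
    exact no_descent_between (le_of_lt (Fin.lt_def.1 hab)) h3 hm1 hm2

lemma lemB (q : ℝ) (n i : ℕ) :
    (∑ k ∈ Finset.range (i+1), q ^ k) ^ n
      = ∑ π : Equiv.Perm (Fin n),
          (if desNum π ≤ i then q ^ maj π * K q n (i - desNum π) else 0) := by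
  classical
  rw [Finset.sum_pow']
  rw [Finset.sum_congr rfl (fun f _ => Finset.prod_pow_eq_pow_sum Finset.univ f q)]
  rw [← Finset.sum_fiberwise_of_maps_to
    (g := fun f : Fin n → ℕ => Tuple.sort (fun j => i - f j))
    (t := Finset.univ) (fun f _ => Finset.mem_univ _)
    (fun f => q ^ (∑ j, f j))]
  apply Finset.sum_congr rfl
  intro π _
  have hfe : Finset.filter (fun f => Tuple.sort (fun j => i - f j) = π)
        (Fintype.piFinset fun _ : Fin n => Finset.range (i+1))
      = Finset.filter (fun f => Compat π f)
        (Fintype.piFinset fun _ : Fin n => Finset.range (i+1)) := by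
    apply Finset.filter_congr
    intro f hf
    have hfi : ∀ j, f j ≤ i := fun j => by
      have := Fintype.mem_piFinset.1 hf j
      rw [Finset.mem_range] at this
      omega
    exact fiber_eq hfi
  rw [hfe]
  by_cases hd : desNum π ≤ i
  · rw [if_pos hd, K, Finset.mul_sum]
    refine Finset.sum_nbij' (fun f (k : Fin n) => f (π k) - dcount π (k : ℕ))
      (fun g (j : Fin n) => g (π⁻¹ j) + dcount π ((π⁻¹ j : Fin n) : ℕ)) ?_ ?_ ?_ ?_ ?_
    · -- forward map lands in antFuns
      intro f hf
      rw [Finset.mem_filter] at hf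
      obtain ⟨hpi, hcompat⟩ := hf
      have hfi : ∀ j, f j ≤ i := fun j => by
        have := Fintype.mem_piFinset.1 hpi j
        rw [Finset.mem_range] at this
        omega
      rw [antFuns, Finset.mem_filter]
      constructor
      · rw [Fintype.mem_piFinset]
        intro k
        rw [Finset.mem_range]
        have h1 := compat_upper hcompat hfi k.isLt
        have h2 := compat_dcount_le hcompat k.isLt
        simp only [Fin.eta] at h1 h2
        beta_reduce
        omega
      · intro a b hab
        have h1 := compat_chain hcompat (b : ℕ) b.isLt (a : ℕ) hab
        have h2 := compat_dcount_le hcompat a.isLt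
        have h3 := compat_dcount_le hcompat b.isLt
        simp only [Fin.eta] at h1 h2 h3
        beta_reduce
        omega
    · -- backward map lands in the fiber
      intro g hg
      rw [Finset.mem_filter]
      constructor
      · rw [Fintype.mem_piFinset]
        intro j
        rw [Finset.mem_range]
        have h1 : g (π⁻¹ j) ≤ i - desNum π := by
          have := Fintype.mem_piFinset.1 (Finset.mem_filter.1 hg).1 (π⁻¹ j)
          rw [Finset.mem_range] at this
          omega
        have h2 : dcount π ((π⁻¹ j : Fin n) : ℕ) ≤ desNum π := by
          rw [← dcount_zero (π := π)]
          exact dcount_mono (Nat.zero_le _)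
        beta_reduce
        omega
      · exact backward_compat hg
    · -- left inverse
      intro f hf
      have hcompat := (Finset.mem_filter.1 hf).2
      funext j
      have h2 := compat_dcount_le hcompat (π⁻¹ j).isLt
      simp only [Fin.eta] at h2
      show f (π (π⁻¹ j)) - dcount π ((π⁻¹ j : Fin n) : ℕ)
          + dcount π ((π⁻¹ j : Fin n) : ℕ) = f j
      rw [Equiv.Perm.coe_inv, Equiv.apply_symm_apply] at h2 ⊢
      omega
    · -- right inverse
      intro g hg
      funext k
      show g (π⁻¹ (π k)) + dcount π ((π⁻¹ (π k) : Fin n) : ℕ) - dcount π (k : ℕ) = g k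
      rw [Equiv.Perm.coe_inv, Equiv.symm_apply_apply]
      omega
    · -- weights
      intro f hf
      have hcompat := (Finset.mem_filter.1 hf).2
      have key : maj π + ∑ k : Fin n, (f (π k) - dcount π (k : ℕ)) = ∑ j, f j := by
        rw [← sum_dcount (π := π), ← Finset.sum_add_distrib, ← Equiv.sum_comp π f]
        apply Finset.sum_congr rfl
        intro k _
        have h2 := compat_dcount_le hcompat k.isLt
        simp only [Fin.eta] at h2
        omega
      rw [← key, pow_add]
  · rw [if_neg hd]
    have hempty : Finset.filter (fun f => Compat π f)
        (Fintype.piFinset fun _ : Fin n => Finset.range (i+1)) = ∅ := by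
      rw [Finset.filter_eq_empty_iff]
      intro f hf hcompat
      have hcard : desNum π ≤ n - 1 := by
        rw [desNum]
        calc (desSet π).card ≤ (Finset.range (n-1)).card :=
              Finset.card_le_card (Finset.filter_subset _ _)
          _ = n - 1 := Finset.card_range _
      have hn : 0 < n := by omega
      have h1 := compat_dcount_le hcompat hn
      rw [dcount_zero] at h1
      have h2 : f (π ⟨0, hn⟩) ≤ i := by
        have := Fintype.mem_piFinset.1 hf (π ⟨0, hn⟩)
        rw [Finset.mem_range] at this
        omega
      omega
    rw [hempty, Finset.sum_empty]

lemma antFuns_zero_right (m : ℕ) : antFuns 0 m = {fun j => j.elim0} := by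
  ext g
  simp only [antFuns, Finset.mem_filter, Fintype.mem_piFinset, Finset.mem_singleton]
  constructor
  · intro _; funext j; exact j.elim0
  · intro _; exact ⟨fun j => j.elim0, fun a => a.elim0⟩

lemma K_zero_right (q : ℝ) (m : ℕ) : K q 0 m = 1 := by
  rw [K, antFuns_zero_right, Finset.sum_singleton]
  simp

lemma antFuns_zero (nn : ℕ) : antFuns nn 0 = {fun _ => 0} := by
  ext g
  simp only [antFuns, Finset.mem_filter, Fintype.mem_piFinset, Finset.mem_range,
    Finset.mem_singleton]
  constructor
  · rintro ⟨hv, _⟩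
    funext j
    have := hv j
    omega
  · rintro rfl
    exact ⟨fun j => by simp, fun a b _ => le_rfl⟩

lemma K_zero (q : ℝ) (nn : ℕ) : K q nn 0 = 1 := by
  rw [K, antFuns_zero, Finset.sum_singleton]
  simp

lemma K_succ (q : ℝ) (nn m : ℕ) :
    K q (nn+1) (m+1) = K q (nn+1) m + q^(m+1) * K q nn (m+1) := by
  classical
  rw [K, ← Finset.sum_filter_add_sum_filter_not (antFuns (nn+1) (m+1)) (fun g => g 0 ≤ m)]
  congr 1
  · -- the part with g 0 ≤ m is antFuns (nn+1) m
    rw [K]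
    apply Finset.sum_congr _ (fun x _ => rfl)
    ext g
    simp only [Finset.mem_filter, antFuns, Fintype.mem_piFinset, Finset.mem_range]
    constructor
    · rintro ⟨⟨hv, ha⟩, h0⟩
      refine ⟨fun j => ?_, ha⟩
      have := ha 0 j (Fin.zero_le j)
      omega
    · rintro ⟨hv, ha⟩
      refine ⟨⟨fun j => by have := hv j; omega, ha⟩, by have := hv 0; omega⟩
  · -- the part with g 0 = m + 1
    rw [K, Finset.mul_sum]
    refine Finset.sum_nbij' (fun g => g ∘ Fin.succ)
      (fun h => Fin.cases (m+1) h) ?_ ?_ ?_ ?_ ?_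
    · intro g hgmem
      simp only [Finset.mem_filter, antFuns, Fintype.mem_piFinset, Finset.mem_range,
        not_le] at hgmem ⊢
      obtain ⟨⟨hv, ha⟩, h0⟩ := hgmem
      exact ⟨fun j => hv _, fun a b hab => ha _ _ (Fin.succ_le_succ_iff.2 hab)⟩
    · intro h hmem
      simp only [Finset.mem_filter, antFuns, Fintype.mem_piFinset, Finset.mem_range,
        not_le] at hmem ⊢
      obtain ⟨hv, ha⟩ := hmem
      refine ⟨⟨fun j => ?_, fun a b hab => ?_⟩, ?_⟩
      · rcases Fin.eq_zero_or_eq_succ j with rfl | ⟨j', rfl⟩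
        · simp
        · simp only [Fin.cases_succ]
          have := hv j'
          omega
      · rcases Fin.eq_zero_or_eq_succ b with rfl | ⟨b', rfl⟩
        · have : a = 0 := Fin.le_zero_iff.1 hab
          subst this
          exact le_rfl
        · rcases Fin.eq_zero_or_eq_succ a with rfl | ⟨a', rfl⟩
          · simp only [Fin.cases_succ, Fin.cases_zero]
            have := hv b'
            omega
          · simp only [Fin.cases_succ]
            exact ha a' b' (by rwa [Fin.succ_le_succ_iff] at hab)
      · simp
    · intro g hgmem
      simp only [Finset.mem_filter, not_le] at hgmem
      funext j
      rcases Fin.eq_zero_or_eq_succ j with rfl | ⟨j', rfl⟩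
      · simp only [Fin.cases_zero]
        have hv := (Finset.mem_filter.1 hgmem.1).1
        have := Fintype.mem_piFinset.1 hv 0
        rw [Finset.mem_range] at this
        omega
      · simp
    · intro h _
      funext j
      simp
    · intro g hgmem
      simp only [Finset.mem_filter, not_le] at hgmem
      have hv := (Finset.mem_filter.1 hgmem.1).1
      have h0 : g 0 = m + 1 := by
        have := Fintype.mem_piFinset.1 hv 0
        rw [Finset.mem_range] at this
        omega
      rw [← pow_add]
      congr 1
      rw [Fin.sum_univ_succ, h0]
      rfl

lemma mkK_rec (q : ℝ) (nn : ℕ) :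
    (1 - X) * PowerSeries.mk (fun m => K q (nn+1) m)
      = PowerSeries.mk (fun m => q ^ m * K q nn m) := by
  ext m
  rw [sub_mul, one_mul, map_sub, coeff_mk]
  cases m with
  | zero =>
    rw [show ((coeff 0) (X * PowerSeries.mk fun m => K q (nn+1) m)) = 0 by
      rw [coeff_zero_eq_constantCoeff, map_mul]
      simp]
    rw [coeff_mk, K_zero, K_zero]
    simp
  | succ m =>
    rw [coeff_succ_X_mul, coeff_mk, coeff_mk, K_succ]
    ring

lemma prodK (q : ℝ) (nn : ℕ) :
    (∏ j ∈ Finset.range (nn + 1), (1 - PowerSeries.C (q ^ j) * PowerSeries.X)) *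
      PowerSeries.mk (fun m => K q nn m) = 1 := by
  induction nn with
  | zero =>
    rw [Finset.prod_range_one]
    simp only [pow_zero, map_one, one_mul]
    ext m
    rw [sub_mul, one_mul, map_sub]
    cases m with
    | zero =>
      rw [coeff_zero_eq_constantCoeff]
      simp [K_zero_right]
    | succ m =>
      rw [coeff_succ_X_mul, coeff_mk, coeff_mk, K_zero_right, K_zero_right]
      simp
  | succ nn ih =>
    have hresc := congrArg (rescale q) ih
    rw [map_mul, map_prod, map_one, rescale_mk] at hresc
    have hfac : ∀ j : ℕ, rescale q (1 - PowerSeries.C (q ^ j) * PowerSeries.X)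
        = 1 - PowerSeries.C (q ^ (j+1)) * PowerSeries.X := by
      intro j
      rw [map_sub, map_one, map_mul, rescale_X]
      have : (rescale q) (PowerSeries.C (q ^ j)) = PowerSeries.C (q ^ j) := by
        ext k
        rw [coeff_rescale, coeff_C]
        cases k with
        | zero => simp
        | succ k => simp
      rw [this, ← mul_assoc, ← map_mul, pow_succ]
    simp only [hfac] at hresc
    rw [Finset.prod_range_succ']
    simp only [pow_zero, map_one, one_mul]
    calc (∏ j ∈ Finset.range (nn+1), (1 - PowerSeries.C (q ^ (j+1)) * PowerSeries.X))
          * (1 - X) * PowerSeries.mk (fun m => K q (nn+1) m)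
        = (∏ j ∈ Finset.range (nn+1), (1 - PowerSeries.C (q ^ (j+1)) * PowerSeries.X))
          * ((1 - X) * PowerSeries.mk (fun m => K q (nn+1) m)) := by ring
      _ = (∏ j ∈ Finset.range (nn+1), (1 - PowerSeries.C (q ^ (j+1)) * PowerSeries.X))
          * PowerSeries.mk (fun m => q ^ m * K q nn m) := by rw [mkK_rec]
      _ = 1 := hresc

lemma coeff_monomial_mul' (d : ℕ) (a : ℝ) (φ : PowerSeries ℝ) (i : ℕ) :
    (PowerSeries.coeff i) ((PowerSeries.monomial d) a * φ)
      = if d ≤ i then a * (PowerSeries.coeff (i - d)) φ else 0 := by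
  rw [show (PowerSeries.monomial d) a = PowerSeries.C a * X ^ d by
      ext m; rw [coeff_monomial, coeff_C_mul_X_pow],
    mul_assoc, coeff_C_mul, coeff_X_pow_mul', mul_ite, mul_zero]

lemma lemB' (q : ℝ) (n : ℕ) :
    PowerSeries.mk (fun i => (∑ k ∈ Finset.range (i + 1), q ^ k) ^ n)
      = (∑ π : Equiv.Perm (Fin n), (PowerSeries.monomial (desNum π)) (q ^ maj π)) *
          PowerSeries.mk (fun m => K q n m) := by
  ext i
  rw [coeff_mk, Finset.sum_mul, map_sum, lemB q n i]
  apply Finset.sum_congr rfl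
  intro π _
  rw [coeff_monomial_mul', coeff_mk]

end CarlitzAux

/-- Carlitz's formula, as an identity of formal power series in `t` (coefficients are
polynomials in `q`, so we state it for every real `q`):
`∑ (π ∈ S_n) t^{des π} q^{maj π} = (t;q)_{n+1} ∑_{i ≥ 0} [i+1]_q^n t^i`. -/
theorem stmt9 (n : ℕ) (q : ℝ) :
    (∑ π : Equiv.Perm (Fin n), (PowerSeries.monomial (R := ℝ) (desNum π)) (q ^ maj π)) =
      (∏ j ∈ Finset.range (n + 1), (1 - PowerSeries.C (R := ℝ) (q ^ j) * PowerSeries.X)) *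
        PowerSeries.mk (fun i => (∑ k ∈ Finset.range (i + 1), q ^ k) ^ n) := by
  rw [CarlitzAux.lemB' q n, ← mul_assoc, mul_comm _ (∑ π : Equiv.Perm (Fin n), _), mul_assoc,
    CarlitzAux.prodK q n, mul_one]
end

section
/- The q-beta integral: for nonnegative integers n and m and 0<q<1, ∫_0^1 x^n (xq;q)_m d_q x = [n]_q! [m]_q! / [n+m+1]_q!. -/
private lemma qbeta_fac_pos {q : ℝ} (hq0 : 0 < q) (hq1 : q < 1) (j : ℕ) (hj : j ≠ 0) :
    0 < 1 - q ^ j := by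
  have : q ^ j < 1 := pow_lt_one₀ hq0.le hq1 hj
  linarith

private lemma qbeta_summable {q : ℝ} (hq0 : 0 < q) (hq1 : q < 1) (n m : ℕ) :
    Summable (fun i : ℕ => q ^ (i * (n + 1)) * ∏ k ∈ Finset.range m, (1 - q ^ (i + 1 + k))) := by
  have hg : Summable (fun i : ℕ => (q ^ (n + 1)) ^ i) :=
    summable_geometric_of_lt_one (by positivity) (pow_lt_one₀ hq0.le hq1 (Nat.succ_ne_zero n))
  refine hg.of_nonneg_of_le (fun i => ?_) (fun i => ?_)
  · refine mul_nonneg (by positivity) (Finset.prod_nonneg fun k _ => ?_)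
    exact (qbeta_fac_pos hq0 hq1 (i + 1 + k) (by omega)).le
  · have h1 : ∏ k ∈ Finset.range m, (1 - q ^ (i + 1 + k)) ≤ 1 := by
      apply Finset.prod_le_one
      · exact fun k _ => (qbeta_fac_pos hq0 hq1 (i + 1 + k) (by omega)).le
      · intro k _
        have : 0 < q ^ (i + 1 + k) := by positivity
        linarith
    have h2 : q ^ (i * (n + 1)) * ∏ k ∈ Finset.range m, (1 - q ^ (i + 1 + k))
        ≤ q ^ (i * (n + 1)) := mul_le_of_le_one_right (by positivity) h1
    calc q ^ (i * (n + 1)) * ∏ k ∈ Finset.range m, (1 - q ^ (i + 1 + k))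
        ≤ q ^ (i * (n + 1)) := h2
      _ = (q ^ (n + 1)) ^ i := by rw [mul_comm, pow_mul]

private lemma qbeta_key {q : ℝ} (hq0 : 0 < q) (hq1 : q < 1) :
    ∀ m n : ℕ,
      (∑' i : ℕ, q ^ (i * (n + 1)) * ∏ k ∈ Finset.range m, (1 - q ^ (i + 1 + k))) *
        ∏ k ∈ Finset.range (m + 1), (1 - q ^ (n + 1 + k)) =
      ∏ k ∈ Finset.range m, (1 - q ^ (k + 1)) := by
  intro m
  induction m with
  | zero =>
    intro n
    simp only [Finset.range_zero, Finset.prod_empty, mul_one, zero_add, Finset.prod_range_one,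
      pow_zero, Nat.add_zero, add_zero]
    have hlt : q ^ (n + 1) < 1 := pow_lt_one₀ hq0.le hq1 (Nat.succ_ne_zero n)
    have : ∑' i : ℕ, q ^ (i * (n + 1)) = (1 - q ^ (n + 1))⁻¹ := by
      have := tsum_geometric_of_lt_one (by positivity : (0:ℝ) ≤ q ^ (n + 1)) hlt
      rw [← this]
      congr 1
      ext i
      rw [mul_comm, pow_mul]
    rw [this, inv_mul_cancel₀ (ne_of_gt (qbeta_fac_pos hq0 hq1 (n + 1) (Nat.succ_ne_zero n)))]
  | succ m ih =>
    intro n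
    have hA := qbeta_summable hq0 hq1 n m
    have hB := qbeta_summable hq0 hq1 (n + 1) m
    have hsplit : (∑' i : ℕ, q ^ (i * (n + 1)) * ∏ k ∈ Finset.range (m + 1), (1 - q ^ (i + 1 + k)))
        = (∑' i : ℕ, q ^ (i * (n + 1)) * ∏ k ∈ Finset.range m, (1 - q ^ (i + 1 + k)))
          - q ^ (m + 1) * ∑' i : ℕ, q ^ (i * (n + 2)) * ∏ k ∈ Finset.range m, (1 - q ^ (i + 1 + k)) := by
      rw [← tsum_mul_left, ← Summable.tsum_sub hA (hB.mul_left _)]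
      congr 1
      ext i
      rw [Finset.prod_range_succ]
      have hpow : q ^ (m + 1) * q ^ (i * (n + 2)) = q ^ (i + 1 + m) * q ^ (i * (n + 1)) := by
        rw [← pow_add, ← pow_add]
        congr 1
        ring
      linear_combination (∏ k ∈ Finset.range m, (1 - q ^ (i + 1 + k))) * hpow
    set A := ∑' i : ℕ, q ^ (i * (n + 1)) * ∏ k ∈ Finset.range m, (1 - q ^ (i + 1 + k)) with hAdef
    set B := ∑' i : ℕ, q ^ (i * (n + 2)) * ∏ k ∈ Finset.range m, (1 - q ^ (i + 1 + k)) with hBdef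
    have ihA := ih n
    have ihB := ih (n + 1)
    rw [show n + 1 + 1 = n + 2 from rfl] at ihB
    rw [hsplit, Finset.prod_range_succ (fun k => 1 - q ^ (k + 1)) m]
    have hD1 : ∏ k ∈ Finset.range (m + 1 + 1), (1 - q ^ (n + 1 + k))
        = (∏ k ∈ Finset.range (m + 1), (1 - q ^ (n + 1 + k))) * (1 - q ^ (n + 1 + (m + 1))) :=
      Finset.prod_range_succ _ _
    have hD2 : ∏ k ∈ Finset.range (m + 1 + 1), (1 - q ^ (n + 1 + k))
        = (∏ k ∈ Finset.range (m + 1), (1 - q ^ (n + 2 + k))) * (1 - q ^ (n + 1)) := by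
      rw [Finset.prod_range_succ', add_zero]
      congr 1
      exact Finset.prod_congr rfl fun k _ => by rw [show n + 1 + (k + 1) = n + 2 + k by omega]
    have hpow2 : q ^ (m + 1) * q ^ (n + 1) = q ^ (n + 1 + (m + 1)) := by
      rw [← pow_add]; congr 1; omega
    linear_combination A * hD1 + (1 - q ^ (n + 1 + (m + 1))) * ihA
      - q ^ (m + 1) * B * hD2 - q ^ (m + 1) * (1 - q ^ (n + 1)) * ihB
      + (∏ k ∈ Finset.range m, (1 - q ^ (k + 1))) * hpow2

/-- The `q`-beta integral: `∫_0^1 x^n (xq;q)_m d_q x = [n]_q! [m]_q! / [n+m+1]_q!`. -/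
theorem stmt11 (n m : ℕ) (q : ℝ) (hq0 : 0 < q) (hq1 : q < 1) :
    qInt q 0 1 (fun x => x ^ n * qPoch q (x * q) m) =
      qFact q n * qFact q m / qFact q (n + m + 1) := by
  have hq : (1 : ℝ) - q ≠ 0 := by linarith
  have hS : qInt q 0 1 (fun x => x ^ n * qPoch q (x * q) m)
      = (1 - q) * ∑' i : ℕ, q ^ (i * (n + 1)) * ∏ k ∈ Finset.range m, (1 - q ^ (i + 1 + k)) := by
    unfold qInt qPoch
    congr 1
    refine tsum_congr fun i => ?_
    simp only [zero_mul, mul_zero, one_mul, sub_zero]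
    have h1 : (q ^ i) ^ n * q ^ i = q ^ (i * (n + 1)) := by
      rw [← pow_mul, ← pow_add, Nat.mul_succ]
    have h2 : ∏ k ∈ Finset.range m, (1 - q ^ i * q * q ^ k)
        = ∏ k ∈ Finset.range m, (1 - q ^ (i + 1 + k)) :=
      Finset.prod_congr rfl fun k _ => by
        rw [show q ^ i * q * q ^ k = q ^ (i + 1 + k) by rw [pow_add, pow_add, pow_one]]
    rw [h2, show (q ^ i) ^ n * (∏ k ∈ Finset.range m, (1 - q ^ (i + 1 + k))) * q ^ i
        = ((q ^ i) ^ n * q ^ i) * ∏ k ∈ Finset.range m, (1 - q ^ (i + 1 + k)) by ring, h1]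
  have hkey := qbeta_key hq0 hq1 m n
  have hP : (∏ k ∈ Finset.range (m + 1), (1 - q ^ (n + 1 + k))) ≠ 0 :=
    Finset.prod_ne_zero_iff.mpr fun k _ => ne_of_gt (qbeta_fac_pos hq0 hq1 _ (by omega))
  have hQn : (∏ k ∈ Finset.range n, (1 - q ^ (k + 1))) ≠ 0 :=
    Finset.prod_ne_zero_iff.mpr fun k _ => ne_of_gt (qbeta_fac_pos hq0 hq1 _ (by omega))
  have hfactN : ∀ N : ℕ, qFact q N = (∏ k ∈ Finset.range N, (1 - q ^ (k + 1))) / (1 - q) ^ N := by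
    intro N
    unfold qFact qNum
    rw [Finset.prod_div_distrib, Finset.prod_const, Finset.card_range]
  have hsplitQ : (∏ k ∈ Finset.range (n + m + 1), (1 - q ^ (k + 1)))
      = (∏ k ∈ Finset.range n, (1 - q ^ (k + 1))) *
        ∏ k ∈ Finset.range (m + 1), (1 - q ^ (n + 1 + k)) := by
    rw [show n + m + 1 = n + (m + 1) by omega, Finset.prod_range_add]
    congr 1
    exact Finset.prod_congr rfl fun k _ => by rw [show n + k + 1 = n + 1 + k by omega]
  have hS' : (∑' i : ℕ, q ^ (i * (n + 1)) * ∏ k ∈ Finset.range m, (1 - q ^ (i + 1 + k)))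
      = (∏ k ∈ Finset.range m, (1 - q ^ (k + 1))) /
        ∏ k ∈ Finset.range (m + 1), (1 - q ^ (n + 1 + k)) :=
    eq_div_of_mul_eq hP hkey
  rw [hS, hS', hfactN, hfactN, hfactN, hsplitQ]
  field_simp
  ring
end

section
/- A q-analogue of Dirichlet's integral: for nonnegative integers k₁,…,k_{n+1} and 0<q<1, the iterated q-integral over 0 ≤ y₁ ≤ ⋯ ≤ y_n ≤ 1 of y₁^{k₁}·(q y_n;q)_{k_{n+1}}·∏_{i=2}^n y_i^{k_i}(q y_{i-1}/y_i ; q)_{k_i}, in the order d_q y₁ ⋯ d_q y_n, equals [k₁]_q!⋯[k_{n+1}]_q! / [n+k₁+⋯+k_{n+1}]_q!. -/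
open Classical in
/-- Auxiliary iterated `q`-integral over the order polytope (inside the box `[a,b]^n`)
of the relation `r`: at step `k+1` the variable with index `k` is integrated (so the
integration order is `d_q x₀ d_q x₁ ⋯`, `x₀` innermost), its lower bound being the
maximum of `a` and all not-yet-integrated variables below it, and its upper bound the
minimum of `b` and all not-yet-integrated variables above it. -/
noncomputable def orderIntAux (q a b : ℝ) {n : ℕ} (r : Fin n → Fin n → Prop)
    (f : (Fin n → ℝ) → ℝ) : ℕ → (Fin n → ℝ) → ℝ
  | 0, x => f x
  | (k + 1), x =>
    if h : k < n then
      qInt q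
        ((Finset.univ.filter (fun j : Fin n => k < (j : ℕ) ∧ r j ⟨k, h⟩)).fold max a x)
        ((Finset.univ.filter (fun j : Fin n => k < (j : ℕ) ∧ r ⟨k, h⟩ j)).fold min b x)
        (fun u => orderIntAux q a b r f k (Function.update x ⟨k, h⟩ u))
    else orderIntAux q a b r f k x

/-- The iterated `q`-integral `∫_{O_I(P)} f d_q x₁ ⋯ d_q x_n` of `f` over the order
polytope of the poset relation `r` truncated to the box `[a,b]^n`, with integration
order `d_q x₁ ⋯ d_q x_n` (i.e. `x₁` innermost). -/
noncomputable def orderInt (q a b : ℝ) {n : ℕ} (r : Fin n → Fin n → Prop)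
    (f : (Fin n → ℝ) → ℝ) : ℝ :=
  orderIntAux q a b r f n (fun _ => 0)



section qbeta
variable {q : ℝ} (hq0 : 0 < q) (hq1 : q < 1)
include hq0 hq1

lemma qpow_lt_one (m : ℕ) : q^(m+1) < 1 := pow_lt_one₀ hq0.le hq1 (Nat.succ_ne_zero m)

lemma qNum_pos (m : ℕ) : 0 < qNum q (m+1) := by
  unfold qNum
  have := qpow_lt_one hq0 hq1 m
  apply div_pos <;> linarith

lemma qFact_pos (n : ℕ) : 0 < qFact q n := by
  unfold qFact
  exact Finset.prod_pos fun i _ => qNum_pos hq0 hq1 i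

lemma qPoch_pos (i m : ℕ) : 0 < qPoch q (q^(i+1)) m := by
  unfold qPoch
  apply Finset.prod_pos
  intro t _
  have h : q^(i+1) * q^t = q^(i+t+1) := by ring
  rw [h]
  have := qpow_lt_one hq0 hq1 (i+t)
  linarith

lemma qPoch_le_one (i m : ℕ) : qPoch q (q^(i+1)) m ≤ 1 := by
  unfold qPoch
  apply Finset.prod_le_one
  · intro t _
    have h : q^(i+1) * q^t = q^(i+t+1) := by ring
    rw [h]
    have := qpow_lt_one hq0 hq1 (i+t)
    linarith
  · intro t _
    have h1 : (0:ℝ) < q^(i+1) := pow_pos hq0 _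
    have h2 : (0:ℝ) < q^t := pow_pos hq0 _
    nlinarith

lemma qbeta_summable_s12 (K m : ℕ) :
    Summable (fun i : ℕ => q^(i*(K+1)) * qPoch q (q^(i+1)) m) := by
  apply Summable.of_nonneg_of_le
    (fun i => le_of_lt (mul_pos (pow_pos hq0 _) (qPoch_pos hq0 hq1 i m)))
    (fun i => ?_) (summable_geometric_of_lt_one hq0.le hq1)
  calc q^(i*(K+1)) * qPoch q (q^(i+1)) m ≤ q^(i*(K+1)) * 1 :=
        mul_le_mul_of_nonneg_left (qPoch_le_one hq0 hq1 i m) (by positivity)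
    _ = q^(i*(K+1)) := mul_one _
    _ ≤ q^i := pow_le_pow_of_le_one hq0.le hq1.le (Nat.le_mul_of_pos_right i (Nat.succ_pos K))

lemma qbeta (m K : ℕ) :
    (1-q) * ∑' i : ℕ, q^(i*(K+1)) * qPoch q (q^(i+1)) m
      = qFact q K * qFact q m / qFact q (K+m+1) := by
  induction m generalizing K with
  | zero =>
    have hgeo : ∑' i : ℕ, q^(i*(K+1)) = (1 - q^(K+1))⁻¹ := by
      have h : ∀ i : ℕ, q^(i*(K+1)) = (q^(K+1))^i := fun i => by rw [← pow_mul, mul_comm]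
      rw [tsum_congr h, tsum_geometric_of_lt_one (by positivity) (qpow_lt_one hq0 hq1 K)]
    have h1 : qFact q (K+0+1) = qFact q K * qNum q (K+1) := by
      simp [qFact, Finset.prod_range_succ]
    have hK : qFact q K ≠ 0 := (qFact_pos hq0 hq1 K).ne'
    have h0 : qFact q 0 = 1 := by simp [qFact]
    simp only [qPoch, Finset.range_zero, Finset.prod_empty, mul_one]
    rw [hgeo, h1, h0, mul_one, div_mul_cancel_left₀ hK, qNum, inv_div, div_eq_mul_inv]
  | succ m ih =>
    have hsplit : ∀ i : ℕ, q^(i*(K+1)) * qPoch q (q^(i+1)) (m+1)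
        = q^(i*(K+1)) * qPoch q (q^(i+1)) m
          - q^(m+1) * (q^(i*(K+1+1)) * qPoch q (q^(i+1)) m) := by
      intro i
      have h : qPoch q (q^(i+1)) (m+1) = qPoch q (q^(i+1)) m * (1 - q^(i+1)*q^m) := by
        simp [qPoch, Finset.prod_range_succ]
      rw [h]
      ring
    rw [tsum_congr hsplit, Summable.tsum_sub (qbeta_summable_s12 hq0 hq1 K m)
      (Summable.mul_left _ (qbeta_summable_s12 hq0 hq1 (K+1) m)), tsum_mul_left]
    have e1 := ih K
    have e2 := ih (K+1)
    have harr : (1-q) * (∑' i : ℕ, q^(i*(K+1)) * qPoch q (q^(i+1)) m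
        - q^(m+1) * ∑' i : ℕ, q^(i*(K+1+1)) * qPoch q (q^(i+1)) m)
        = (1-q) * ∑' i : ℕ, q^(i*(K+1)) * qPoch q (q^(i+1)) m
          - q^(m+1) * ((1-q) * ∑' i : ℕ, q^(i*(K+1+1)) * qPoch q (q^(i+1)) m) := by ring
    rw [harr, e1, e2]
    have f1 : qFact q (K+(m+1)+1) = qFact q (K+m+1) * qNum q (K+m+2) := by
      have h : K+(m+1)+1 = (K+m+1)+1 := by ring
      rw [h, qFact, Finset.prod_range_succ, ← qFact]
    have f2 : qFact q (K+1+m+1) = qFact q (K+m+1) * qNum q (K+m+2) := by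
      have h : K+1+m+1 = (K+m+1)+1 := by ring
      rw [h, qFact, Finset.prod_range_succ, ← qFact]
    have f3 : qFact q (m+1) = qFact q m * qNum q (m+1) := by
      rw [qFact, Finset.prod_range_succ, ← qFact]
    have f4 : qFact q (K+1) = qFact q K * qNum q (K+1) := by
      rw [qFact, Finset.prod_range_succ, ← qFact]
    rw [f1, f2, f3, f4]
    have h1 : qFact q K ≠ 0 := (qFact_pos hq0 hq1 K).ne'
    have h2 : qFact q m ≠ 0 := (qFact_pos hq0 hq1 m).ne'
    have h3 : qFact q (K+m+1) ≠ 0 := (qFact_pos hq0 hq1 _).ne'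
    have h4 : qNum q (K+m+2) ≠ 0 := (qNum_pos hq0 hq1 (K+m+1)).ne'
    have h5 : qNum q (m+1) = qNum q (K+m+2) - q^(m+1) * qNum q (K+1) := by
      have hq : (1:ℝ) - q ≠ 0 := by linarith
      simp only [qNum]
      field_simp
      ring
    field_simp
    rw [h5]

end qbeta


-- helpers
noncomputable def Xp (n : ℕ) (x : Fin n → ℝ) (j : ℕ) : ℝ := if h : j < n then x ⟨j, h⟩ else 1
def Kv (n : ℕ) (k : Fin (n+1) → ℕ) (j : ℕ) : ℕ := if h : j < n+1 then k ⟨j, h⟩ else 0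
def eS (n : ℕ) (k : Fin (n+1) → ℕ) (m : ℕ) : ℕ := m + ∑ i ∈ Finset.range (m+1), Kv n k i

lemma fold_min_eq {α : Type*} [DecidableEq α] {s : Finset α} {f : α → ℝ} {b : ℝ} {a0 : α}
    (ha : a0 ∈ s) (h1 : f a0 ≤ b) (h2 : ∀ a ∈ s, f a0 ≤ f a) : s.fold min b f = f a0 :=
  le_antisymm ((Finset.fold_min_le _).mpr (Or.inr ⟨a0, ha, le_refl _⟩))
    ((Finset.le_fold_min _).mpr ⟨h1, h2⟩)

lemma chain_le {n m : ℕ} {x : Fin n → ℝ}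
    (hmono : ∀ j, m ≤ j → Xp n x j ≤ Xp n x (j+1)) :
    ∀ a b, m ≤ a → a ≤ b → Xp n x a ≤ Xp n x b := by
  intro a b ha hab
  induction b, hab using Nat.le_induction with
  | base => exact le_refl _
  | succ b hb ih => exact le_trans ih (hmono b (le_trans ha hb))

lemma chain_le_one {n m : ℕ} {x : Fin n → ℝ}
    (hmono : ∀ j, m ≤ j → Xp n x j ≤ Xp n x (j+1)) (a : ℕ) (ha : m ≤ a) :
    Xp n x a ≤ 1 := by
  have h1 : Xp n x n = 1 := by rw [Xp]; exact dif_neg (lt_irrefl n)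
  rcases le_or_gt n a with h | h
  · have h2 : Xp n x a = 1 := by rw [Xp]; exact dif_neg (by omega)
    rw [h2]
  · calc Xp n x a ≤ Xp n x n := chain_le hmono a n ha h.le
      _ = 1 := h1

lemma qInt_zero (q c : ℝ) (F : ℝ → ℝ) :
    qInt q 0 c F = (1-q) * ∑' i : ℕ, F (c*q^i) * (c*q^i) := by
  unfold qInt
  congr 1
  apply tsum_congr
  intro i
  simp

lemma main_lemma (n : ℕ) (hn : 1 ≤ n) (k : Fin (n+1) → ℕ) {q : ℝ} (hq0 : 0 < q) (hq1 : q < 1) :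
    ∀ m, m ≤ n → ∀ x : Fin n → ℝ,
      (∀ j, m ≤ j → 0 < Xp n x j) →
      (∀ j, m ≤ j → Xp n x j ≤ Xp n x (j+1)) →
      orderIntAux q 0 1 (fun i j : Fin n => i < j)
        (fun y => y ⟨0, by have := hn; omega⟩ ^ k 0 *
          qPoch q (q * y ⟨n - 1, by have := hn; omega⟩) (k (Fin.last n)) *
          ∏ j : Fin n, if (j : ℕ) = 0 then 1 else
            y j ^ k (Fin.castSucc j) * qPoch q (q * y ⟨(j : ℕ) - 1, Nat.lt_of_le_of_lt (Nat.sub_le _ _) j.isLt⟩ / y j) (k (Fin.castSucc j))) m x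
      = ((∏ i ∈ Finset.range (m+1), qFact q (Kv n k i)) / qFact q (eS n k m))
        * (Xp n x m) ^ (eS n k m)
        * ∏ j ∈ Finset.Ico (m+1) (n+1),
            ((Xp n x j) ^ Kv n k j * qPoch q (q * Xp n x (j-1) / Xp n x j) (Kv n k j)) := by
  intro m
  induction m with
  | zero =>
    intro _ x hpos hmono
    simp only [orderIntAux]
    have hk0 : (0:ℕ) < n := by omega
    have e0 : eS n k 0 = k 0 := by
      simp [eS, Kv, Finset.sum_range_one]
    have c0 : (∏ i ∈ Finset.range (0+1), qFact q (Kv n k i)) = qFact q (k 0) := by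
      simp [Kv]
    have hX0 : Xp n x 0 = x ⟨0, hk0⟩ := by rw [Xp]; exact dif_pos hk0
    have hXn : Xp n x n = 1 := by rw [Xp]; exact dif_neg (lt_irrefl n)
    have hXn1 : Xp n x (n-1) = x ⟨n-1, by omega⟩ := by rw [Xp]; exact dif_pos (by omega)
    set G : ℕ → ℝ := fun j => if j = 0 then 1 else
      Xp n x j ^ Kv n k j * qPoch q (q * Xp n x (j-1) / Xp n x j) (Kv n k j) with hG
    have hfin : (∏ j : Fin n, if (j : ℕ) = 0 then 1 else
        x j ^ k (Fin.castSucc j) * qPoch q (q * x ⟨(j : ℕ) - 1, Nat.lt_of_le_of_lt (Nat.sub_le _ _) j.isLt⟩ / x j) (k (Fin.castSucc j)))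
        = ∏ j ∈ Finset.range n, G j := by
      rw [← Fin.prod_univ_eq_prod_range G n]
      apply Finset.prod_congr rfl
      intro j _
      have h1 : Xp n x (j:ℕ) = x j := by
        rw [Xp, dif_pos j.isLt]
      have h2 : Xp n x ((j:ℕ)-1) = x ⟨(j:ℕ)-1, Nat.lt_of_le_of_lt (Nat.sub_le _ _) j.isLt⟩ := by
        rw [Xp]; exact dif_pos (Nat.lt_of_le_of_lt (Nat.sub_le _ _) j.isLt)
      have h3 : Kv n k (j:ℕ) = k (Fin.castSucc j) := by
        rw [Kv, dif_pos (by have := j.isLt; omega : (j:ℕ) < n+1)]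
        congr 1
      by_cases hj : (j : ℕ) = 0
      · simp [hG, hj]
      · simp only [hG, if_neg hj]
        rw [h1, h2, h3]
    have hrange : ∏ j ∈ Finset.range n, G j = ∏ j ∈ Finset.Ico 1 n, G j := by
      rw [Finset.range_eq_Ico, Finset.prod_eq_prod_Ico_succ_bot (by omega : 0 < n)]
      simp [hG]
    have hsplit : ∏ j ∈ Finset.Ico (0+1) (n+1),
        ((Xp n x j) ^ Kv n k j * qPoch q (q * Xp n x (j-1) / Xp n x j) (Kv n k j))
        = (∏ j ∈ Finset.Ico 1 n,
            ((Xp n x j) ^ Kv n k j * qPoch q (q * Xp n x (j-1) / Xp n x j) (Kv n k j)))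
          * ((Xp n x n) ^ Kv n k n * qPoch q (q * Xp n x (n-1) / Xp n x n) (Kv n k n)) := by
      exact Finset.prod_Ico_succ_top hn _
    have hIcoG : ∏ j ∈ Finset.Ico 1 n, G j = ∏ j ∈ Finset.Ico 1 n,
        ((Xp n x j) ^ Kv n k j * qPoch q (q * Xp n x (j-1) / Xp n x j) (Kv n k j)) := by
      apply Finset.prod_congr rfl
      intro j hj
      obtain ⟨h1, _⟩ := Finset.mem_Ico.mp hj
      rw [hG]
      exact if_neg (by omega)
    have hKn : Kv n k n = k (Fin.last n) := by
      rw [Kv, dif_pos (by omega : n < n+1)]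
      rfl
    rw [hfin, hrange, hIcoG, hsplit, e0, c0, hX0, hXn, hXn1, hKn]
    have hfk : qFact q (k 0) ≠ 0 := (qFact_pos hq0 hq1 _).ne'
    rw [div_self hfk]
    rw [one_pow, div_one]
    ring
  | succ m ih =>
    intro hm1 x hpos hmono
    have hm : m < n := hm1
    simp only [orderIntAux]
    rw [dif_pos hm]
    -- lower bound is 0
    have hlow : (Finset.univ.filter
        (fun j : Fin n => m < (j : ℕ) ∧ j < ⟨m, hm⟩)) = ∅ := by
      apply Finset.filter_false_of_mem
      rintro j _ ⟨h1, h2⟩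
      simp only [Fin.lt_def, Fin.val_mk] at h2
      omega
    -- upper bound is Xp n x (m+1)
    set c := Xp n x (m+1) with hc_def
    have hc : 0 < c := hpos (m+1) le_rfl
    have hup : (Finset.univ.filter
        (fun j : Fin n => m < (j : ℕ) ∧ (⟨m, hm⟩ : Fin n) < j)).fold min 1 x = c := by
      by_cases hmn : m+1 < n
      · have hmem : (⟨m+1, hmn⟩ : Fin n) ∈ Finset.univ.filter
            (fun j : Fin n => m < (j : ℕ) ∧ (⟨m, hm⟩ : Fin n) < j) := by
          simp [Fin.lt_def]
        have hx : x ⟨m+1, hmn⟩ = c := by rw [hc_def, Xp, dif_pos hmn]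
        rw [fold_min_eq hmem ?h1 ?h2, hx]
        case h1 =>
          rw [hx]
          exact chain_le_one hmono (m+1) le_rfl
        case h2 =>
          intro a ha
          obtain ⟨-, h1, -⟩ := Finset.mem_filter.mp ha
          have hle2 : Xp n x (m+1) ≤ Xp n x (a : ℕ) := chain_le hmono (m+1) (a : ℕ) le_rfl (by omega)
          rw [hx]
          rwa [hc_def.symm, Xp, dif_pos a.isLt, Fin.eta] at hle2
      · have hn' : m+1 = n := by omega
        have hempty : (Finset.univ.filter
            (fun j : Fin n => m < (j : ℕ) ∧ (⟨m, hm⟩ : Fin n) < j)) = ∅ := by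
          apply Finset.filter_false_of_mem
          rintro j _ ⟨h1, -⟩
          have := j.isLt
          omega
        rw [hempty, Finset.fold_empty, hc_def, Xp, dif_neg (by omega)]
    have hgen : ∀ lo hi : ℝ, lo = 0 → hi = c →
        qInt q lo hi (fun u => orderIntAux q 0 1 (fun i j : Fin n => i < j)
          (fun y => y ⟨0, by have := hn; omega⟩ ^ k 0 *
            qPoch q (q * y ⟨n - 1, by have := hn; omega⟩) (k (Fin.last n)) *
            ∏ j : Fin n, if (j : ℕ) = 0 then 1 else
              y j ^ k (Fin.castSucc j) * qPoch q (q * y ⟨(j : ℕ) - 1, Nat.lt_of_le_of_lt (Nat.sub_le _ _) j.isLt⟩ / y j) (k (Fin.castSucc j)))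
          m (Function.update x ⟨m, hm⟩ u))
        = ((∏ i ∈ Finset.range (m+1+1), qFact q (Kv n k i)) / qFact q (eS n k (m+1)))
          * (Xp n x (m+1)) ^ (eS n k (m+1))
          * ∏ j ∈ Finset.Ico (m+1+1) (n+1),
              ((Xp n x j) ^ Kv n k j * qPoch q (q * Xp n x (j-1) / Xp n x j) (Kv n k j)) := by
      rintro lo hi rfl rfl
      rw [qInt_zero]
      set E := eS n k m with hE_def
      set K1 := Kv n k (m+1) with hK1_def
      set Cm := (∏ i ∈ Finset.range (m+1), qFact q (Kv n k i)) / qFact q E with hCm_def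
      set R := ∏ j ∈ Finset.Ico (m+2) (n+1),
          ((Xp n x j) ^ Kv n k j * qPoch q (q * Xp n x (j-1) / Xp n x j) (Kv n k j)) with hR_def
      have hterm : ∀ i : ℕ,
          orderIntAux q 0 1 (fun i j : Fin n => i < j)
            (fun y => y ⟨0, by have := hn; omega⟩ ^ k 0 *
              qPoch q (q * y ⟨n - 1, by have := hn; omega⟩) (k (Fin.last n)) *
              ∏ j : Fin n, if (j : ℕ) = 0 then 1 else
                y j ^ k (Fin.castSucc j) * qPoch q (q * y ⟨(j : ℕ) - 1, Nat.lt_of_le_of_lt (Nat.sub_le _ _) j.isLt⟩ / y j) (k (Fin.castSucc j)))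
            m (Function.update x ⟨m, hm⟩ (c * q ^ i)) * (c * q ^ i)
          = (Cm * c^(E + K1 + 1) * R) * (q^(i*(E+1)) * qPoch q (q^(i+1)) K1) := by
        intro i
        have hu : 0 < c * q ^ i := mul_pos hc (pow_pos hq0 i)
        set x' := Function.update x (⟨m, hm⟩ : Fin n) (c * q ^ i) with hx'_def
        have hXne : ∀ j, j ≠ m → Xp n x' j = Xp n x j := by
          intro j hj
          by_cases h : j < n
          · simp only [Xp]
            rw [dif_pos h, dif_pos h, hx'_def]
            exact Function.update_of_ne (by simp [Fin.ext_iff]; omega) _ _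
          · simp only [Xp]
            rw [dif_neg h, dif_neg h]
        have hXm : Xp n x' m = c * q ^ i := by
          simp only [Xp]
          rw [dif_pos hm, hx'_def]
          exact Function.update_self _ _ _
        have hle : c * q ^ i ≤ c := by
          nlinarith [pow_le_one₀ hq0.le hq1.le (n := i)]
        have hpos' : ∀ j, m ≤ j → 0 < Xp n x' j := by
          intro j hj
          rcases eq_or_lt_of_le hj with h | h
          · rw [← h, hXm]; exact hu
          · rw [hXne j (by omega)]; exact hpos j (by omega)
        have hmono' : ∀ j, m ≤ j → Xp n x' j ≤ Xp n x' (j+1) := by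
          intro j hj
          rcases eq_or_lt_of_le hj with h | h
          · subst h
            rw [hXm, hXne (m+1) (by omega), ← hc_def]
            exact hle
          · rw [hXne j (by omega), hXne (j+1) (by omega)]
            exact hmono j (by omega)
        rw [ih (le_of_lt hm) x' hpos' hmono']
        rw [Finset.prod_eq_prod_Ico_succ_bot (show m+1 < n+1 by omega)]
        have hXm1 : Xp n x' (m+1) = c := by rw [hXne (m+1) (by omega)]
        have hsub : q * Xp n x' (m+1-1) / Xp n x' (m+1) = q^(i+1) := by
          have h0 : m+1-1 = m := rfl
          rw [h0, hXm, hXm1]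
          field_simp
          ring
        have hrest : (∏ j ∈ Finset.Ico (m+2) (n+1),
            ((Xp n x' j) ^ Kv n k j * qPoch q (q * Xp n x' (j-1) / Xp n x' j) (Kv n k j))) = R := by
          rw [hR_def]
          apply Finset.prod_congr rfl
          intro j hj
          obtain ⟨h1, h2⟩ := Finset.mem_Ico.mp hj
          rw [hXne j (by omega), hXne (j-1) (by omega)]
        rw [hsub, hXm1, hXm, hrest]
        ring
      rw [tsum_congr hterm, tsum_mul_left,
        show (1-q) * ((Cm * c^(E + K1 + 1) * R) * ∑' i : ℕ, q^(i*(E+1)) * qPoch q (q^(i+1)) K1)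
          = (Cm * c^(E + K1 + 1) * R) * ((1-q) * ∑' i : ℕ, q^(i*(E+1)) * qPoch q (q^(i+1)) K1) from by ring,
        qbeta hq0 hq1 K1 E]
      have heS : eS n k (m+1) = E + K1 + 1 := by
        rw [hE_def, hK1_def, eS, eS, Finset.sum_range_succ]
        omega
      have hC : (∏ i ∈ Finset.range (m+1+1), qFact q (Kv n k i))
          = (∏ i ∈ Finset.range (m+1), qFact q (Kv n k i)) * qFact q K1 := by
        rw [Finset.prod_range_succ, hK1_def]
      rw [heS, hC, hCm_def]
      have h1 : qFact q E ≠ 0 := (qFact_pos hq0 hq1 _).ne'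
      have h2 : qFact q (E + K1 + 1) ≠ 0 := (qFact_pos hq0 hq1 _).ne'
      field_simp
      ring
    refine hgen _ _ ?_ ?_
    · rw [Finset.filter_congr_decidable]
      rw [hlow, Finset.fold_empty]
    · rw [Finset.filter_congr_decidable]
      exact hup

/-- A `q`-analogue of Dirichlet's integral: the iterated `q`-integral over
`0 ≤ y₁ ≤ ⋯ ≤ y_n ≤ 1` (in the order `d_q y₁ ⋯ d_q y_n`) of
`y₁^{k₁} (q yₙ;q)_{k_{n+1}} ∏_{i=2}^n y_i^{k_i} (q y_{i-1}/y_i;q)_{k_i}`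
equals `[k₁]_q! ⋯ [k_{n+1}]_q! / [n + k₁ + ⋯ + k_{n+1}]_q!`.
Here `y i` is 0-indexed: `y_j = y ⟨j-1⟩`, and `k : Fin (n+1) → ℕ`. -/
theorem stmt12 (n : ℕ) (hn : 1 ≤ n) (k : Fin (n + 1) → ℕ) (q : ℝ)
    (hq0 : 0 < q) (hq1 : q < 1) :
    orderInt q 0 1 (fun i j : Fin n => i < j)
      (fun y => y ⟨0, by omega⟩ ^ k 0 *
        qPoch q (q * y ⟨n - 1, by omega⟩) (k (Fin.last n)) *
        ∏ j : Fin n, if (j : ℕ) = 0 then 1 else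
          y j ^ k (Fin.castSucc j) * qPoch q (q * y ⟨(j : ℕ) - 1, by have := j.isLt; omega⟩ / y j) (k (Fin.castSucc j))) =
      (∏ i : Fin (n + 1), qFact q (k i)) / qFact q (n + ∑ i, k i) := by
  rw [orderInt]
  have hpos : ∀ j, n ≤ j → 0 < Xp n (fun _ => (0:ℝ)) j := by
    intro j hj
    rw [Xp, dif_neg (by omega)]
    exact one_pos
  have hmono : ∀ j, n ≤ j → Xp n (fun _ => (0:ℝ)) j ≤ Xp n (fun _ => (0:ℝ)) (j+1) := by
    intro j hj
    rw [Xp, dif_neg (by omega), Xp, dif_neg (by omega)]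
  rw [main_lemma n hn k hq0 hq1 n le_rfl (fun _ => 0) hpos hmono]
  rw [Finset.Ico_self, Finset.prod_empty, mul_one]
  have hX : Xp n (fun _ => (0:ℝ)) n = 1 := by rw [Xp]; exact dif_neg (lt_irrefl n)
  rw [hX, one_pow, mul_one]
  have hprod : (∏ i ∈ Finset.range (n+1), qFact q (Kv n k i)) = ∏ i : Fin (n+1), qFact q (k i) := by
    rw [← Fin.prod_univ_eq_prod_range (fun i => qFact q (Kv n k i)) (n+1)]
    apply Finset.prod_congr rfl
    intro i _
    congr 1
    rw [Kv, dif_pos i.isLt]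
  have heS : eS n k n = n + ∑ i, k i := by
    rw [eS]
    congr 1
    rw [← Fin.sum_univ_eq_sum_range (fun i => Kv n k i) (n+1)]
    apply Finset.sum_congr rfl
    intro i _
    rw [Kv, dif_pos i.isLt]
  rw [hprod, heS]
end

section
/- Let F be a forest poset on {x₁,…,x_n} such that the labeling x_i ↦ i is natural (i.e., x_i ≤_F x_j implies i ≤ j), and let a = (a₁,…,a_n) be nonnegative integers. Then the iterated q-integral ∫_{O(F)} x₁^{a₁}⋯x_n^{a_n} d_q x₁⋯d_q x_n equals ∏_{v ∈ F_a} 1/[h_{F_a}(v)]_q, where F_a is the forest obtained from F by attaching a_i new leaves below x_i for each i, and h(v) denotes the hook length |{w : w ≤ v}|. -/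
/-- An element `j` covers `i` in the poset `le`. -/
def Covers {n : ℕ} (le : Fin n → Fin n → Prop) (i j : Fin n) : Prop :=
  le i j ∧ i ≠ j ∧ ∀ c, le i c → le c j → c = i ∨ c = j

lemma qInt_congr (q a b : ℝ) (f g : ℝ → ℝ) (h1 : ∀ i : ℕ, f (b * q ^ i) = g (b * q ^ i))
    (h2 : ∀ i : ℕ, f (a * q ^ i) = g (a * q ^ i)) : qInt q a b f = qInt q a b g := by
  unfold qInt
  congr 1
  exact tsum_congr fun i => by rw [h1 i, h2 i]

lemma qInt_monomial (q : ℝ) (hq0 : 0 < q) (hq1 : q < 1) (t B : ℝ) (E : ℕ) :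
    qInt q 0 t (fun u => B * u ^ E) = B * t ^ (E + 1) * (1 / qNum q (E + 1)) := by
  have hqE : q ^ (E + 1) < 1 := pow_lt_one₀ hq0.le hq1 (Nat.succ_ne_zero E)
  have hqE0 : (0 : ℝ) ≤ q ^ (E + 1) := by positivity
  have hkey : ∀ i : ℕ,
      (B * (t * q ^ i) ^ E * (t * q ^ i) - B * (0 * q ^ i) ^ E * (0 * q ^ i))
        = (B * t ^ (E + 1)) * (q ^ (E + 1)) ^ i := by
    intro i
    rw [zero_mul, mul_zero, sub_zero, mul_pow, ← pow_mul, pow_succ, pow_succ]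
    ring_nf
  unfold qInt
  rw [tsum_congr hkey, tsum_mul_left, tsum_geometric_of_lt_one hqE0 hqE]
  have h1 : (1 : ℝ) - q ≠ 0 := by linarith
  have h2 : (1 : ℝ) - q ^ (E + 1) ≠ 0 := by linarith
  unfold qNum
  field_simp

section Forest
variable {n : ℕ} {le : Fin n → Fin n → Prop}

lemma val_lt_of_le_ne (hle : IsPartialOrder (Fin n) le) (hnat : ∀ i j, le i j → i ≤ j)
    {i j : Fin n} (h : le i j) (hne : i ≠ j) : (i : ℕ) < (j : ℕ) := by
  have h1 : (i : ℕ) ≤ (j : ℕ) := hnat i j h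
  have h2 : (i : ℕ) ≠ (j : ℕ) := fun e => hne (Fin.ext e)
  omega

lemma exists_cover_le (hle : IsPartialOrder (Fin n) le) (hnat : ∀ i j, le i j → i ≤ j)
    {i c : Fin n} (hic : le i c) (hne : i ≠ c) : ∃ m, Covers le i m ∧ le m c := by
  classical
  set S := Finset.univ.filter (fun d => le i d ∧ le d c ∧ d ≠ i) with hS
  have hcS : c ∈ S := by
    simp only [hS, Finset.mem_filter, Finset.mem_univ, true_and]
    exact ⟨hic, hle.refl c, Ne.symm hne⟩
  obtain ⟨m, hmS, hmin⟩ := Finset.exists_min_image S (fun d => (d : ℕ)) ⟨c, hcS⟩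
  simp only [hS, Finset.mem_filter, Finset.mem_univ, true_and] at hmS
  refine ⟨m, ⟨hmS.1, Ne.symm hmS.2.2, ?_⟩, hmS.2.1⟩
  intro e hie hem
  by_cases he : e = i
  · exact Or.inl he
  · have heS : e ∈ S := by
      simp only [hS, Finset.mem_filter, Finset.mem_univ, true_and]
      exact ⟨hie, hle.trans e m c hem hmS.2.1, he⟩
    have h1 : (m : ℕ) ≤ (e : ℕ) := hmin e heS
    have h2 : (e : ℕ) ≤ (m : ℕ) := hnat e m hem
    exact Or.inr (Fin.ext (le_antisymm h2 h1))

lemma chain_aux (hle : IsPartialOrder (Fin n) le) (hnat : ∀ i j, le i j → i ≤ j)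
    (hforest : ∀ i j k : Fin n, Covers le i j → Covers le i k → j = k) :
    ∀ d : ℕ, ∀ i j j' : Fin n, n - (i : ℕ) ≤ d → le i j → le i j' → le j j' ∨ le j' j := by
  intro d
  induction d with
  | zero =>
    intro i j j' hd _ _
    have := i.isLt
    omega
  | succ d ihd =>
    intro i j j' hd hij hij'
    by_cases hji : j = i
    · exact Or.inl (hji ▸ hij')
    by_cases hj'i : j' = i
    · exact Or.inr (hj'i ▸ hij)
    obtain ⟨m, hm, hmj⟩ := exists_cover_le hle hnat hij (fun e => hji e.symm)
    obtain ⟨m', hm', hmj'⟩ := exists_cover_le hle hnat hij' (fun e => hj'i e.symm)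
    have hmm : m = m' := hforest i m m' hm hm'
    subst hmm
    have him : (i : ℕ) < (m : ℕ) := val_lt_of_le_ne hle hnat hm.1 hm.2.1
    exact ihd m j j' (by omega) hmj hmj'

lemma chainUp (hle : IsPartialOrder (Fin n) le) (hnat : ∀ i j, le i j → i ≤ j)
    (hforest : ∀ i j k : Fin n, Covers le i j → Covers le i k → j = k)
    {i j j' : Fin n} (hij : le i j) (hij' : le i j') : le j j' ∨ le j' j :=
  chain_aux hle hnat hforest n i j j' (by omega) hij hij'

end Forest

open Classical in
noncomputable def hookW {n : ℕ} (le : Fin n → Fin n → Prop) (a : Fin n → ℕ) (i : Fin n) : ℕ :=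
  (Finset.univ.filter fun j => le j i).card + ∑ j ∈ Finset.univ.filter (fun j => le j i), a j

open Classical in
noncomputable def topsF {n : ℕ} (le : Fin n → Fin n → Prop) (k : ℕ) : Finset (Fin n) :=
  Finset.univ.filter fun i => (i : ℕ) < k ∧ ∀ j, le i j → i ≠ j → k ≤ (j : ℕ)

open Classical in
noncomputable def MF {n : ℕ} (le : Fin n → Fin n → Prop) (k : ℕ) (i : Fin n) (x : Fin n → ℝ) : ℝ :=
  (Finset.univ.filter (fun j : Fin n => k ≤ (j : ℕ) ∧ le i j)).fold min 1 x

open Classical in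
lemma hookW_eq_sum {n : ℕ} (le : Fin n → Fin n → Prop) (a : Fin n → ℕ) (i : Fin n) :
    hookW le a i = ∑ j ∈ Finset.univ.filter (fun j => le j i), (1 + a j) := by
  rw [hookW, Finset.sum_add_distrib, Finset.sum_const, smul_eq_mul, mul_one]

open Classical in
lemma hookW_decomp {n : ℕ} {le : Fin n → Fin n → Prop} (hle : IsPartialOrder (Fin n) le)
    (hnat : ∀ i j, le i j → i ≤ j)
    (hforest : ∀ i j k : Fin n, Covers le i j → Covers le i k → j = k)
    (a : Fin n → ℕ) (κ : Fin n) :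
    hookW le a κ = (1 + a κ) +
      ∑ i ∈ (topsF le (κ : ℕ)).filter (fun i => le i κ), hookW le a i := by
  classical
  set k : ℕ := (κ : ℕ) with hk
  set D : Fin n → Finset (Fin n) := fun i => Finset.univ.filter (fun j => le j i) with hD
  set T1 : Finset (Fin n) := (topsF le k).filter (fun i => le i κ) with hT1
  have hmemT1 : ∀ i, i ∈ T1 ↔ ((i : ℕ) < k ∧ (∀ j, le i j → i ≠ j → k ≤ (j : ℕ)) ∧ le i κ) := by
    intro i
    simp only [hT1, topsF, Finset.mem_filter, Finset.mem_univ, true_and]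
    tauto
  have hdecomp : D κ = insert κ (T1.biUnion D) := by
    ext j
    simp only [hD, Finset.mem_filter, Finset.mem_univ, true_and, Finset.mem_insert,
      Finset.mem_biUnion]
    constructor
    · intro hjκ
      by_cases hjk : j = κ
      · exact Or.inl hjk
      · refine Or.inr ?_
        set S := Finset.univ.filter (fun c => le j c ∧ le c κ ∧ c ≠ κ) with hS
        have hjS : j ∈ S := by
          simp only [hS, Finset.mem_filter, Finset.mem_univ, true_and]
          exact ⟨hle.refl j, hjκ, hjk⟩
        obtain ⟨i, hiS, hmax⟩ := Finset.exists_max_image S (fun d => (d : ℕ)) ⟨j, hjS⟩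
        simp only [hS, Finset.mem_filter, Finset.mem_univ, true_and] at hiS
        refine ⟨i, ?_, hiS.1⟩
        rw [hmemT1]
        refine ⟨val_lt_of_le_ne hle hnat hiS.2.1 hiS.2.2, ?_, hiS.2.1⟩
        intro e hie hine
        rcases chainUp hle hnat hforest hie hiS.2.1 with hcase | hcase
        · by_cases heκ : e = κ
          · rw [heκ]
          · have heS : e ∈ S := by
              simp only [hS, Finset.mem_filter, Finset.mem_univ, true_and]
              exact ⟨hle.trans j i e hiS.1 hie, hcase, heκ⟩
            have h1 : (e : ℕ) ≤ (i : ℕ) := hmax e heS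
            have h2 : (i : ℕ) < (e : ℕ) := val_lt_of_le_ne hle hnat hie hine
            omega
        · have h3 : (κ : ℕ) ≤ (e : ℕ) := hnat κ e hcase
          omega
    · rintro (rfl | ⟨i, hiT1, hji⟩)
      · exact hle.refl j
      · rw [hmemT1] at hiT1
        exact hle.trans j i κ hji hiT1.2.2
  have hκnot : κ ∉ T1.biUnion D := by
    intro hmem
    rw [Finset.mem_biUnion] at hmem
    obtain ⟨i, hiT1, hκi⟩ := hmem
    rw [hmemT1] at hiT1
    simp only [hD, Finset.mem_filter, Finset.mem_univ, true_and] at hκi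
    have := hnat κ i hκi
    omega
  have hdisj : ∀ i₁ ∈ T1, ∀ i₂ ∈ T1, i₁ ≠ i₂ → Disjoint (D i₁) (D i₂) := by
    intro i₁ h₁ i₂ h₂ hne
    rw [hmemT1] at h₁ h₂
    rw [Finset.disjoint_left]
    intro j hj₁ hj₂
    simp only [hD, Finset.mem_filter, Finset.mem_univ, true_and] at hj₁ hj₂
    rcases chainUp hle hnat hforest hj₁ hj₂ with hcase | hcase
    · have := h₁.2.1 i₂ hcase hne
      omega
    · have := h₂.2.1 i₁ hcase (Ne.symm hne)
      omega
  rw [hookW_eq_sum, show Finset.univ.filter (fun j => le j κ) = D κ from rfl, hdecomp,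
    Finset.sum_insert hκnot, Finset.sum_biUnion]
  · congr 1
    apply Finset.sum_congr rfl
    intro i _
    rw [hookW_eq_sum]
  · intro i₁ h₁ i₂ h₂ hne
    exact hdisj i₁ h₁ i₂ h₂ hne

open Classical in
theorem keyInd {n : ℕ} (le : Fin n → Fin n → Prop) (hle : IsPartialOrder (Fin n) le)
    (hnat : ∀ i j, le i j → i ≤ j)
    (hforest : ∀ i j k : Fin n, Covers le i j → Covers le i k → j = k)
    (a : Fin n → ℕ) (q : ℝ) (hq0 : 0 < q) (hq1 : q < 1) :
    ∀ k : ℕ, k ≤ n → ∀ x : Fin n → ℝ,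
      (∀ j : Fin n, k ≤ (j : ℕ) → 0 ≤ x j ∧ x j ≤ 1) →
      (∀ j j' : Fin n, k ≤ (j : ℕ) → le j j' → x j ≤ x j') →
      orderIntAux q 0 1 le (fun y => ∏ i, y i ^ a i) k x =
        (∏ i ∈ Finset.univ.filter (fun i : Fin n => k ≤ (i : ℕ)), x i ^ a i) *
        (∏ i ∈ topsF le k, (MF le k i x) ^ hookW le a i) *
        ∏ i ∈ Finset.univ.filter (fun i : Fin n => (i : ℕ) < k), (1 / qNum q (hookW le a i)) := by
  intro k
  induction k with
  | zero =>
    intro _ x _ _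
    simp [orderIntAux, topsF]
  | succ k ih =>
    intro hk1 x hx01 hchain
    classical
    have hkn : k < n := hk1
    rw [orderIntAux, dif_pos hkn]
    set κ : Fin n := (⟨k, hkn⟩ : Fin n) with hκdef
    have hκval : (κ : ℕ) = k := rfl
    have hlowset : (Finset.univ.filter (fun j : Fin n => k < (j : ℕ) ∧ le j κ)) = ∅ := by
      rw [Finset.filter_eq_empty_iff]
      rintro j - ⟨h1, h2⟩
      have h3 : (j : ℕ) ≤ k := hnat j κ h2
      omega
    rw [hlowset, Finset.fold_empty]
    set t : ℝ := (Finset.univ.filter (fun j : Fin n => k < (j : ℕ) ∧ le κ j)).fold min 1 x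
      with ht
    have hup : ∀ j : Fin n, k ≤ (j : ℕ) → j ≠ κ → k + 1 ≤ (j : ℕ) := by
      intro j h1 h2
      have h3 : (j : ℕ) ≠ k := fun e => h2 (Fin.ext (by rw [e, hκval]))
      omega
    have hne : ∀ j : Fin n, k + 1 ≤ (j : ℕ) → j ≠ κ := by
      intro j hj hjκ
      rw [hjκ, hκval] at hj
      omega
    have ht1 : t ≤ 1 := (Finset.fold_min_le 1).2 (Or.inl le_rfl)
    have ht0 : 0 ≤ t := by
      refine (Finset.le_fold_min 0).2 ⟨zero_le_one, ?_⟩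
      intro j hj
      simp only [Finset.mem_filter, Finset.mem_univ, true_and] at hj
      exact (hx01 j (by omega)).1
    have htle : ∀ j : Fin n, k < (j : ℕ) → le κ j → t ≤ x j := by
      intro j h1 h2
      refine (Finset.fold_min_le (x j)).2 (Or.inr ⟨j, ?_, le_rfl⟩)
      simp only [Finset.mem_filter, Finset.mem_univ, true_and]
      exact ⟨h1, h2⟩
    set T1 : Finset (Fin n) := (topsF le k).filter (fun i => le i κ) with hT1
    set T2 : Finset (Fin n) := (topsF le k).filter (fun i => ¬ le i κ) with hT2
    set E : ℕ := a κ + ∑ i ∈ T1, hookW le a i with hE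
    set B : ℝ := (∏ i ∈ Finset.univ.filter (fun i : Fin n => k + 1 ≤ (i : ℕ)), x i ^ a i) *
        ((∏ i ∈ T2, (MF le (k + 1) i x) ^ hookW le a i) *
          ∏ i ∈ Finset.univ.filter (fun i : Fin n => (i : ℕ) < k),
            (1 / qNum q (hookW le a i))) with hB
    have hsplit : Finset.univ.filter (fun i : Fin n => k ≤ (i : ℕ)) =
        insert κ (Finset.univ.filter (fun i : Fin n => k + 1 ≤ (i : ℕ))) := by
      ext i
      simp only [Finset.mem_filter, Finset.mem_univ, true_and, Finset.mem_insert]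
      constructor
      · intro h
        by_cases hiκ : i = κ
        · exact Or.inl hiκ
        · exact Or.inr (hup i h hiκ)
      · rintro (rfl | h)
        · omega
        · omega
    have hκnotin : κ ∉ Finset.univ.filter (fun i : Fin n => k + 1 ≤ (i : ℕ)) := by
      simp only [Finset.mem_filter, Finset.mem_univ, true_and, hκval]
      omega
    have hInt : ∀ u : ℝ, 0 ≤ u → u ≤ 1 → (∀ j : Fin n, k < (j : ℕ) → le κ j → u ≤ x j) →
        orderIntAux q 0 1 le (fun y => ∏ i, y i ^ a i) k (Function.update x κ u) =
          B * u ^ E := by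
      intro u hu0 hu1 hux
      have hbounds : ∀ j : Fin n, k ≤ (j : ℕ) →
          0 ≤ Function.update x κ u j ∧ Function.update x κ u j ≤ 1 := by
        intro j hj
        by_cases hjκ : j = κ
        · rw [hjκ, Function.update_self]
          exact ⟨hu0, hu1⟩
        · rw [Function.update_of_ne hjκ]
          exact hx01 j (hup j hj hjκ)
      have hchain' : ∀ j j' : Fin n, k ≤ (j : ℕ) → le j j' →
          Function.update x κ u j ≤ Function.update x κ u j' := by
        intro j j' hj hljj'
        by_cases hjκ : j = κ
        · subst hjκ
          by_cases hj'κ : j' = κ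
          · rw [hj'κ]
          · rw [Function.update_self, Function.update_of_ne hj'κ]
            have hlt : k < (j' : ℕ) := by
              have := val_lt_of_le_ne hle hnat hljj' (fun e => hj'κ e.symm)
              omega
            exact hux j' hlt hljj'
        · have hj1 : k + 1 ≤ (j : ℕ) := hup j hj hjκ
          by_cases hj'κ : j' = κ
          · exfalso
            rw [hj'κ] at hljj'
            have : (j : ℕ) ≤ k := hnat j κ hljj'
            omega
          · rw [Function.update_of_ne hjκ, Function.update_of_ne hj'κ]
            exact hchain j j' hj1 hljj'
      have key := ih (le_of_lt hkn) (Function.update x κ u) hbounds hchain'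
      rw [key]
      have hP1 : (∏ i ∈ Finset.univ.filter (fun i : Fin n => k ≤ (i : ℕ)),
          Function.update x κ u i ^ a i) =
          u ^ a κ * ∏ i ∈ Finset.univ.filter (fun i : Fin n => k + 1 ≤ (i : ℕ)), x i ^ a i := by
        rw [hsplit, Finset.prod_insert hκnotin, Function.update_self]
        congr 1
        refine Finset.prod_congr rfl ?_
        intro i hi
        simp only [Finset.mem_filter, Finset.mem_univ, true_and] at hi
        rw [Function.update_of_ne (hne i hi)]
      have hMT1 : ∀ i ∈ T1, MF le k i (Function.update x κ u) = u := by
        intro i hi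
        rw [hT1, Finset.mem_filter] at hi
        have hitops := hi.1
        rw [topsF, Finset.mem_filter] at hitops
        simp only [MF]
        have hκmem : κ ∈ Finset.univ.filter (fun j : Fin n => k ≤ (j : ℕ) ∧ le i j) := by
          simp only [Finset.mem_filter, Finset.mem_univ, true_and, hκval]
          exact ⟨le_rfl, hi.2⟩
        apply le_antisymm
        · exact (Finset.fold_min_le u).2
            (Or.inr ⟨κ, hκmem, le_of_eq (Function.update_self κ u x)⟩)
        · refine (Finset.le_fold_min u).2 ⟨hu1, ?_⟩
          intro j hj
          simp only [Finset.mem_filter, Finset.mem_univ, true_and] at hj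
          by_cases hjκ : j = κ
          · rw [hjκ, Function.update_self]
          · rw [Function.update_of_ne hjκ]
            have hj1 : k + 1 ≤ (j : ℕ) := hup j hj.1 hjκ
            rcases chainUp hle hnat hforest hj.2 hi.2 with hc | hc
            · exfalso
              have : (j : ℕ) ≤ k := hnat j κ hc
              omega
            · exact hux j (by omega) hc
      have hMT2 : ∀ i ∈ T2, MF le k i (Function.update x κ u) = MF le (k + 1) i x := by
        intro i hi
        rw [hT2, Finset.mem_filter] at hi
        simp only [MF]
        have hsets : Finset.univ.filter (fun j : Fin n => k ≤ (j : ℕ) ∧ le i j) =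
            Finset.univ.filter (fun j : Fin n => k + 1 ≤ (j : ℕ) ∧ le i j) := by
          ext j
          simp only [Finset.mem_filter, Finset.mem_univ, true_and]
          constructor
          · rintro ⟨h1, h2⟩
            refine ⟨?_, h2⟩
            by_cases hjκ : j = κ
            · rw [hjκ] at h2
              exact absurd h2 hi.2
            · exact hup j h1 hjκ
          · rintro ⟨h1, h2⟩
            exact ⟨by omega, h2⟩
        rw [hsets]
        apply Finset.fold_congr
        intro j hj
        simp only [Finset.mem_filter, Finset.mem_univ, true_and] at hj
        exact Function.update_of_ne (hne j hj.1) u x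
      have hP2 : (∏ i ∈ topsF le k, (MF le k i (Function.update x κ u)) ^ hookW le a i) =
          u ^ (∑ i ∈ T1, hookW le a i) *
            ∏ i ∈ T2, (MF le (k + 1) i x) ^ hookW le a i := by
        rw [← Finset.prod_filter_mul_prod_filter_not (topsF le k) (fun i => le i κ)]
        rw [← hT1, ← hT2]
        congr 1
        · rw [← Finset.prod_pow_eq_pow_sum]
          exact Finset.prod_congr rfl (fun i hi => by rw [hMT1 i hi])
        · exact Finset.prod_congr rfl (fun i hi => by rw [hMT2 i hi])
      rw [hP1, hP2, hB, hE, pow_add]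
      ring
    have hcong : qInt q 0 t
        (fun u => orderIntAux q 0 1 le (fun y => ∏ i, y i ^ a i) k (Function.update x κ u)) =
        qInt q 0 t (fun u => B * u ^ E) := by
      apply qInt_congr
      · intro i
        refine hInt (t * q ^ i) (mul_nonneg ht0 (pow_nonneg hq0.le i)) ?_ ?_
        · calc t * q ^ i ≤ t * 1 := by
                have := pow_le_one₀ hq0.le hq1.le (n := i)
                nlinarith
          _ = t := mul_one t
          _ ≤ 1 := ht1
        · intro j hj hlej
          calc t * q ^ i ≤ t := by
                have := pow_le_one₀ hq0.le hq1.le (n := i)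
                nlinarith
          _ ≤ x j := htle j hj hlej
      · intro i
        rw [zero_mul]
        exact hInt 0 le_rfl zero_le_one (fun j hj _ => (hx01 j (by omega)).1)
    rw [hcong, qInt_monomial q hq0 hq1 t B E]
    have hwκ : hookW le a κ = E + 1 := by
      rw [hookW_decomp hle hnat hforest a κ, hE]
      have : (topsF le (κ : ℕ)).filter (fun i => le i κ) = T1 := by
        rw [hT1, hκval]
      rw [this]
      omega
    have hMκ : MF le (k + 1) κ x = t := by
      have hfs : Finset.univ.filter (fun j : Fin n => k + 1 ≤ (j : ℕ) ∧ le κ j) =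
          Finset.univ.filter (fun j : Fin n => k < (j : ℕ) ∧ le κ j) :=
        Finset.filter_congr (fun j _ => Iff.rfl)
      rw [MF, hfs, ht]
    have htops : topsF le (k + 1) = insert κ T2 := by
      ext i
      simp only [topsF, Finset.mem_filter, Finset.mem_univ, true_and, Finset.mem_insert]
      constructor
      · rintro ⟨hik, hanc⟩
        by_cases hiκ : i = κ
        · exact Or.inl hiκ
        · refine Or.inr ?_
          rw [hT2, Finset.mem_filter, topsF, Finset.mem_filter]
          have hik' : (i : ℕ) < k := by
            have : (i : ℕ) ≠ k := fun e => hiκ (Fin.ext (by rw [e, hκval]))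
            omega
          refine ⟨⟨Finset.mem_univ i, hik', ?_⟩, ?_⟩
          · intro j hij hinej
            have := hanc j hij hinej
            omega
          · intro hiκle
            have := hanc κ hiκle (fun e => hiκ e)
            rw [hκval] at this
            omega
      · rintro (rfl | hi)
        · refine ⟨by omega, ?_⟩
          intro j hij hinej
          have := val_lt_of_le_ne hle hnat hij hinej
          omega
        · rw [hT2, Finset.mem_filter, topsF, Finset.mem_filter] at hi
          obtain ⟨⟨-, hik, hanc⟩, hnle⟩ := hi
          refine ⟨by omega, ?_⟩
          intro j hij hinej
          have h1 := hanc j hij hinej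
          by_cases hjκ : j = κ
          · rw [hjκ] at hij
            exact absurd hij hnle
          · have : (j : ℕ) ≠ k := fun e => hjκ (Fin.ext (by rw [e, hκval]))
            omega
    have hκnotT2 : κ ∉ T2 := by
      rw [hT2, Finset.mem_filter, topsF, Finset.mem_filter]
      rintro ⟨⟨-, h, -⟩, -⟩
      rw [hκval] at h
      omega
    have hfilter1 : Finset.univ.filter (fun i : Fin n => (i : ℕ) < k + 1) =
        insert κ (Finset.univ.filter (fun i : Fin n => (i : ℕ) < k)) := by
      ext i
      simp only [Finset.mem_filter, Finset.mem_univ, true_and, Finset.mem_insert]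
      constructor
      · intro h
        by_cases hiκ : i = κ
        · exact Or.inl hiκ
        · have : (i : ℕ) ≠ k := fun e => hiκ (Fin.ext (by rw [e, hκval]))
          exact Or.inr (by omega)
      · rintro (rfl | h)
        · omega
        · omega
    have hκnotlt : κ ∉ Finset.univ.filter (fun i : Fin n => (i : ℕ) < k) := by
      simp only [Finset.mem_filter, Finset.mem_univ, true_and, hκval]
      omega
    rw [htops, Finset.prod_insert hκnotT2, hfilter1, Finset.prod_insert hκnotlt, hMκ, hwκ, hB]
    ring

open Classical in
/-- `q`-integral of a monomial over the order polytope of a naturally labeled forest `F`: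
`∫_{O(F)} x₁^{a₁} ⋯ x_n^{a_n} d_q x₁ ⋯ d_q x_n = ∏_{v ∈ F_a} 1/[h_{F_a}(v)]_q`,
where `F_a` is obtained from `F` by attaching `a_i` new leaves below `x_i`.  Each new
leaf has hook length `1` (contributing a factor `1/[1]_q = 1`), and the hook length in
`F_a` of the original element `x_i` is `h_F(x_i) + ∑_{j ≤_F x_i} a_j`; this gives the
right-hand side below. -/
theorem stmt15 (n : ℕ) (le : Fin n → Fin n → Prop) (hle : IsPartialOrder (Fin n) le)
    (hnat : ∀ i j, le i j → i ≤ j)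
    (hforest : ∀ i j k : Fin n, Covers le i j → Covers le i k → j = k)
    (a : Fin n → ℕ) (q : ℝ) (hq0 : 0 < q) (hq1 : q < 1) :
    orderInt q 0 1 le (fun x => ∏ i, x i ^ a i) =
      ∏ i : Fin n, 1 / qNum q ((Finset.univ.filter fun j => le j i).card +
        ∑ j ∈ Finset.univ.filter (fun j => le j i), a j) := by
  classical
  have key := keyInd le hle hnat hforest a q hq0 hq1 n le_rfl (fun _ => 0)
    (fun j hj => absurd j.isLt (by omega))
    (fun j j' hj _ => absurd j.isLt (by omega))
  rw [orderInt, key]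
  have h1 : Finset.univ.filter (fun i : Fin n => n ≤ (i : ℕ)) = ∅ := by
    rw [Finset.filter_eq_empty_iff]
    intro i _ h
    exact absurd i.isLt (by omega)
  have h2 : ∀ i : Fin n, MF le n i (fun _ => (0 : ℝ)) = 1 := by
    intro i
    have hemp : Finset.univ.filter (fun j : Fin n => n ≤ (j : ℕ) ∧ le i j) = ∅ := by
      rw [Finset.filter_eq_empty_iff]
      rintro j - ⟨h, -⟩
      exact absurd j.isLt (by omega)
    rw [MF, hemp, Finset.fold_empty]
  have h3 : Finset.univ.filter (fun i : Fin n => (i : ℕ) < n) = Finset.univ := by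
    apply Finset.filter_true_of_mem
    intro i _
    exact i.isLt
  rw [h1, h3]
  rw [Finset.prod_congr (rfl : topsF le n = topsF le n) (fun i _ => by rw [h2 i, one_pow])]
  simp [hookW]
end

section
/- Hook length formula for linear extensions of a naturally labeled forest: if F is a forest poset on {x₁,…,x_n} naturally labeled by x_i ↦ i, then ∑_{π ∈ L(F)} q^{maj(π)} = [n]_q! / ∏_{v ∈ F} [h_F(v)]_q, where L(F) is the set of permutations π = ω(t₁)⋯ω(t_n) arising from linear extensions (t₁,…,t_n) of F. -/
namespace HLF
open Finset
attribute [local instance] Classical.propDecidable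

variable {n : ℕ}

lemma strictMono_of_consec {α : Type*} [Preorder α] {f : Fin n → α}
    (h : ∀ i : ℕ, ∀ hi : i + 1 < n, f ⟨i, Nat.lt_of_succ_lt hi⟩ < f ⟨i + 1, hi⟩) :
    StrictMono f := by
  have H : ∀ d i, ∀ hd : i + d < n, 0 < d → f ⟨i, by omega⟩ < f ⟨i + d, hd⟩ := by
    intro d
    induction d with
    | zero => intro i hd h0; exact absurd h0 (Nat.lt_irrefl 0)
    | succ m ih =>
      intro i hd h0
      rcases Nat.eq_zero_or_pos m with hm | hm
      · subst hm; exact h i (by omega)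
      · have h1 := ih i (by omega) hm
        have h2 := h (i + m) (by omega)
        have : f ⟨i + m + 1, by omega⟩ = f ⟨i + (m + 1), hd⟩ := rfl
        exact h1.trans (this ▸ h2)
  intro a b hab
  have hb : (a : ℕ) + ((b : ℕ) - (a : ℕ)) < n := by omega
  have := H ((b : ℕ) - (a : ℕ)) a hb (Nat.sub_pos_of_lt hab)
  have he : (⟨(a : ℕ) + ((b : ℕ) - (a : ℕ)), hb⟩ : Fin n) = b := by
    apply Fin.ext; simp only []; omega
  rw [he] at this
  have he2 : (⟨(a : ℕ), by omega⟩ : Fin n) = a := by apply Fin.ext; rfl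
  rwa [he2] at this

lemma card_val_le {s : ℕ} (hs : s < n) :
    (Finset.filter (fun i : Fin n => (i : ℕ) ≤ s) univ).card = s + 1 := by
  have he : (Finset.filter (fun i : Fin n => (i : ℕ) ≤ s) univ) = Finset.Iic ⟨s, hs⟩ := by
    ext i; simp [Finset.mem_Iic, Fin.le_def]
  rw [he, Fin.card_Iic]

section Forest

variable {le : Fin n → Fin n → Prop}

/-- the up-set -/
noncomputable def up (le : Fin n → Fin n → Prop) (i : Fin n) : Finset (Fin n) :=
  univ.filter fun k => le i k

/-- the down-set -/
noncomputable def down (le : Fin n → Fin n → Prop) (i : Fin n) : Finset (Fin n) :=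
  univ.filter fun k => le k i

def IsMax' (le : Fin n → Fin n → Prop) (i : Fin n) : Prop := ∀ k, le i k → k = i

variable (hle : IsPartialOrder (Fin n) le)

section
include hle

lemma hrefl : ∀ a, le a a := hle.toIsPreorder.toRefl.refl
lemma htrans : ∀ a b c, le a b → le b c → le a c := hle.toIsPreorder.toIsTrans.trans
lemma hanti : ∀ a b, le a b → le b a → a = b := hle.toAntisymm.antisymm

lemma exists_min_le {s : Finset (Fin n)} (hs : s.Nonempty) :
    ∃ c ∈ s, ∀ d ∈ s, le d c → d = c := by
  obtain ⟨c, hc, hmin⟩ := s.exists_min_image (fun c => (down le c).card) hs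
  refine ⟨c, hc, fun d hd hdc => ?_⟩
  by_contra hne
  have hsub : down le d ⊂ down le c := by
    constructor
    · intro x hx
      simp only [down, mem_filter, mem_univ, true_and] at *
      exact htrans hle _ _ _ hx hdc
    · intro hsub'
      have : c ∈ down le d := hsub' (by simp [down, hrefl hle c])
      simp only [down, mem_filter, mem_univ, true_and] at this
      exact hne (hanti hle _ _ hdc this)
  exact absurd (hmin d hd) (not_le.mpr (Finset.card_lt_card hsub))

lemma exists_cover {i a : Fin n} (hia : le i a) (hne : i ≠ a) :
    ∃ c, Covers le i c ∧ le c a := by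
  have hs : (univ.filter fun c => le i c ∧ le c a ∧ c ≠ i).Nonempty :=
    ⟨a, by simp [hia, hrefl hle a, Ne.symm hne]⟩
  obtain ⟨c, hc, hmin⟩ := exists_min_le hle hs
  simp only [mem_filter, mem_univ, true_and] at hc
  refine ⟨c, ⟨hc.1, Ne.symm hc.2.2, fun x hix hxc => ?_⟩, hc.2.1⟩
  by_cases hxi : x = i
  · exact Or.inl hxi
  · refine Or.inr (hmin x ?_ hxc)
    simp only [mem_filter, mem_univ, true_and]
    exact ⟨hix, htrans hle _ _ _ hxc hc.2.1, hxi⟩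

end

noncomputable def parentOf (le : Fin n → Fin n → Prop) (i : Fin n) : Fin n :=
  if h : ∃ c, Covers le i c then h.choose else i

include hle in
lemma covers_parent {i : Fin n} (hm : ¬ IsMax' le i) : Covers le i (parentOf le i) := by
  have hex0 : ∃ k, le i k ∧ k ≠ i := by
    by_contra hc
    push_neg at hc
    exact hm fun k hk => hc k hk
  obtain ⟨k, hk, hkne⟩ := hex0
  obtain ⟨c, hc, -⟩ := exists_cover hle hk (Ne.symm hkne)
  have hex : ∃ c, Covers le i c := ⟨c, hc⟩
  rw [parentOf, dif_pos hex]
  exact hex.choose_spec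

end Forest

end HLF
namespace HLF
open Finset
attribute [local instance] Classical.propDecidable

section Forest2

variable {n : ℕ} {le : Fin n → Fin n → Prop}
variable (hle : IsPartialOrder (Fin n) le)
variable (hforest : ∀ i j k : Fin n, Covers le i j → Covers le i k → j = k)

lemma mem_up {i k : Fin n} : k ∈ up le i ↔ le i k := by simp [up]

include hle in
lemma up_eq_of_max {i : Fin n} (hm : IsMax' le i) : up le i = {i} := by
  ext k
  simp only [mem_up, Finset.mem_singleton]
  exact ⟨fun h => hm k h, fun h => h ▸ hrefl hle i⟩

include hle hforest in
lemma up_eq_insert {i : Fin n} (hm : ¬ IsMax' le i) :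
    up le i = insert i (up le (parentOf le i)) := by
  have hp := covers_parent hle hm
  ext k
  simp only [mem_up, Finset.mem_insert]
  constructor
  · intro hik
    by_cases hki : k = i
    · exact Or.inl hki
    · obtain ⟨c, hc, hck⟩ := exists_cover hle hik (Ne.symm hki)
      exact Or.inr ((hforest i c _ hc hp) ▸ hck)
  · rintro (rfl | hk)
    · exact hrefl hle k
    · exact htrans hle _ _ _ hp.1 hk

include hle in
lemma not_mem_up_parent {i : Fin n} (hm : ¬ IsMax' le i) :
    i ∉ up le (parentOf le i) := by
  have hp := covers_parent hle hm
  simp only [mem_up]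
  intro hcon
  exact hp.2.1 (hanti hle _ _ hp.1 hcon)

include hle hforest in
lemma card_up_parent {i : Fin n} (hm : ¬ IsMax' le i) :
    (up le i).card = (up le (parentOf le i)).card + 1 := by
  rw [up_eq_insert hle hforest hm,
    Finset.card_insert_of_notMem (not_mem_up_parent hle hm)]

/-- sigma from tau -/
noncomputable def σof (le : Fin n → Fin n → Prop) (τ : Fin n → ℕ) (i : Fin n) : ℕ :=
  ∑ j ∈ up le i, τ j

noncomputable def τof (le : Fin n → Fin n → Prop) (σ : Fin n → ℕ) (j : Fin n) : ℕ :=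
  σ j - (if IsMax' le j then 0 else σ (parentOf le j))

/-- antitone w.r.t. le -/
def Antit (le : Fin n → Fin n → Prop) (σ : Fin n → ℕ) : Prop :=
  ∀ a b, le a b → σ b ≤ σ a

include hle hforest in
lemma σof_rec {τ : Fin n → ℕ} {i : Fin n} (hm : ¬ IsMax' le i) :
    σof le τ i = τ i + σof le τ (parentOf le i) := by
  rw [σof, up_eq_insert hle hforest hm,
    Finset.sum_insert (not_mem_up_parent hle hm)]
  rfl

include hle in
lemma σof_max {τ : Fin n → ℕ} {i : Fin n} (hm : IsMax' le i) : σof le τ i = τ i := by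
  rw [σof, up_eq_of_max hle hm, Finset.sum_singleton]

include hle in
lemma σof_antit (τ : Fin n → ℕ) : Antit le (σof le τ) := by
  intro a b hab
  apply Finset.sum_le_sum_of_subset
  intro k hk
  rw [mem_up] at *
  exact htrans hle _ _ _ hab hk

include hle hforest in
lemma τof_σof (τ : Fin n → ℕ) : τof le (σof le τ) = τ := by
  funext j
  by_cases hm : IsMax' le j
  · rw [τof, if_pos hm, σof_max hle hm, Nat.sub_zero]
  · rw [τof, if_neg hm, σof_rec hle hforest hm, Nat.add_sub_cancel]

include hle hforest in
lemma σof_τof {σ : Fin n → ℕ} (hσ : Antit le σ) : σof le (τof le σ) = σ := by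
  have key : ∀ m : ℕ, ∀ i : Fin n, (up le i).card ≤ m → σof le (τof le σ) i = σ i := by
    intro m
    induction m with
    | zero =>
      intro i hi
      exact absurd (Finset.card_pos.mpr ⟨i, mem_up.mpr (hrefl hle i)⟩) (by omega)
    | succ m ih =>
      intro i hi
      by_cases hm : IsMax' le i
      · rw [σof_max hle hm, τof, if_pos hm, Nat.sub_zero]
      · have hlt := card_up_parent hle hforest hm
        rw [σof_rec hle hforest hm, ih _ (by omega), τof, if_neg hm,
          Nat.sub_add_cancel (hσ _ _ (covers_parent hle hm).1)]
  funext i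
  exact key (up le i).card i le_rfl

lemma sum_σof (τ : Fin n → ℕ) :
    ∑ i, σof le τ i = ∑ j, (down le j).card * τ j := by
  simp only [σof, up, Finset.sum_filter]
  rw [Finset.sum_comm]
  congr 1
  funext j
  rw [← Finset.sum_filter]
  rw [Finset.sum_const, down]
  simp [mul_comm]

/-- The equivalence between free tuples and antitone functions -/
noncomputable def antEquiv (hle : IsPartialOrder (Fin n) le)
    (hforest : ∀ i j k : Fin n, Covers le i j → Covers le i k → j = k) :
    (Fin n → ℕ) ≃ {σ : Fin n → ℕ // Antit le σ} where
  toFun τ := ⟨σof le τ, σof_antit hle τ⟩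
  invFun s := τof le s.1
  left_inv τ := τof_σof hle hforest τ
  right_inv s := Subtype.ext (σof_τof hle hforest s.2)

end Forest2

end HLF
namespace HLF
open Finset
attribute [local instance] Classical.propDecidable

section SortSec

variable {n : ℕ} {le : Fin n → Fin n → Prop}

/-- sorting key: decreasing values, increasing positions -/
def keyF (σ : Fin n → ℕ) (i : Fin n) : ℕᵒᵈ ×ₗ Fin n := toLex (OrderDual.toDual (σ i), i)

/-- a permutation is compatible with σ -/
def Compat (π : Equiv.Perm (Fin n)) (σ : Fin n → ℕ) : Prop :=
  StrictMono fun i => keyF σ (π i)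

lemma keyF_inj {σ : Fin n → ℕ} : Function.Injective (keyF σ) := by
  intro i j h
  exact congrArg (fun p => (ofLex p).2) h

lemma keyF_lt {σ : Fin n → ℕ} {a b : Fin n} :
    keyF σ a < keyF σ b ↔ σ b < σ a ∨ (σ a = σ b ∧ a < b) := by
  rw [keyF, keyF, Prod.Lex.lt_iff]
  simp only [ofLex_toLex, OrderDual.toDual_lt_toDual]
  constructor
  · rintro (h | ⟨h1, h2⟩)
    · exact Or.inl h
    · exact Or.inr ⟨(OrderDual.toDual_inj.mp h1), h2⟩
  · rintro (h | ⟨h1, h2⟩)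
    · exact Or.inl h
    · exact Or.inr ⟨by rw [h1], h2⟩

lemma compat_sort (σ : Fin n → ℕ) : Compat (Tuple.sort (keyF σ)) σ :=
  (Tuple.monotone_sort (keyF σ)).strictMono_of_injective
    (keyF_inj.comp (Equiv.injective _))

lemma compat_eq_sort {π : Equiv.Perm (Fin n)} {σ : Fin n → ℕ} (h : Compat π σ) :
    π = Tuple.sort (keyF σ) := by
  rw [Tuple.eq_sort_iff]
  refine ⟨h.monotone, fun i j hij hfe => ?_⟩
  exact absurd (π.injective (keyF_inj hfe)) (Nat.ne_of_lt hij ∘ congrArg id ∘ fun h => h ▸ rfl)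

lemma compat_unique {π π' : Equiv.Perm (Fin n)} {σ : Fin n → ℕ}
    (h1 : Compat π σ) (h2 : Compat π' σ) : π = π' :=
  (compat_eq_sort h1).trans (compat_eq_sort h2).symm

variable (hle : IsPartialOrder (Fin n) le)

omit hle in
lemma antit_of_compat {π : Equiv.Perm (Fin n)} {σ : Fin n → ℕ}
    (hL : ∀ i j, le (π i) (π j) → i ≤ j) (hc : Compat π σ) : Antit le σ := by
  intro a b hab
  have hab' : le (π (π.symm a)) (π (π.symm b)) := by
    simpa [Equiv.apply_symm_apply] using hab
  have hij : π.symm a ≤ π.symm b := hL _ _ hab'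
  rcases eq_or_lt_of_le hij with heq | hlt
  · have : a = b := by
      have := congrArg π heq
      simpa [Equiv.apply_symm_apply] using this
    exact this ▸ le_rfl
  · have := hc hlt
    rw [keyF_lt] at this
    simp only [Equiv.apply_symm_apply] at this
    rcases this with h | ⟨h, -⟩
    · exact h.le
    · exact h.ge

omit hle in
lemma mem_L_of_compat (hnat : ∀ i j, le i j → i ≤ j) {π : Equiv.Perm (Fin n)}
    {σ : Fin n → ℕ} (hσ : Antit le σ) (hc : Compat π σ) :
    ∀ i j, le (π i) (π j) → i ≤ j := by
  intro i j hij
  by_contra hcon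
  push_neg at hcon
  have hkey := hc hcon
  rw [keyF_lt] at hkey
  have hs : σ (π j) ≤ σ (π i) := hσ _ _ hij
  rcases hkey with h | ⟨-, h⟩
  · omega
  · exact absurd (hnat _ _ hij) (not_le.mpr h)

omit hle in
lemma filter_compat_of_antit (hnat : ∀ i j, le i j → i ≤ j) {σ : Fin n → ℕ}
    (hσ : Antit le σ) :
    ((univ : Finset (Equiv.Perm (Fin n))).filter
        fun π => ∀ i j : Fin n, le (π i) (π j) → i ≤ j).filter (fun π => Compat π σ)
      = {Tuple.sort (keyF σ)} := by
  ext π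
  simp only [Finset.mem_filter, Finset.mem_univ, true_and, Finset.mem_singleton]
  constructor
  · rintro ⟨-, hc⟩
    exact compat_unique hc (compat_sort σ)
  · rintro rfl
    exact ⟨mem_L_of_compat hnat hσ (compat_sort σ), compat_sort σ⟩

omit hle in
lemma filter_compat_of_not {σ : Fin n → ℕ} (hσ : ¬ Antit le σ) :
    ((univ : Finset (Equiv.Perm (Fin n))).filter
        fun π => ∀ i j : Fin n, le (π i) (π j) → i ≤ j).filter (fun π => Compat π σ)
      = ∅ := by
  rw [Finset.filter_eq_empty_iff]
  intro π hπ
  simp only [Finset.mem_filter, Finset.mem_univ, true_and] at hπ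
  exact fun hc => hσ (antit_of_compat hπ hc)

end SortSec

end HLF
namespace HLF
open Finset
attribute [local instance] Classical.propDecidable

section Descents

variable {n : ℕ} (π : Equiv.Perm (Fin n))

lemma mem_desSet {i : ℕ} (h : i + 1 < n) :
    i ∈ desSet π ↔ π ⟨i + 1, h⟩ < π ⟨i, Nat.lt_of_succ_lt h⟩ := by
  rw [desSet, Finset.mem_filter, Finset.mem_range, permVal, permVal,
    dif_pos h, dif_pos (Nat.lt_of_succ_lt h)]
  rw [Fin.lt_def]
  constructor
  · exact fun hh => hh.2
  · exact fun hh => ⟨by omega, hh⟩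

def dC (i : ℕ) : ℕ := ((desSet π).filter fun s => i ≤ s).card

lemma dC_split (i : ℕ) :
    dC π i = dC π (i + 1) + (if i ∈ desSet π then 1 else 0) := by
  rw [dC, dC]
  have hu : (desSet π).filter (fun s => i ≤ s)
      = ((desSet π).filter fun s => i + 1 ≤ s) ∪ ((desSet π).filter fun s => s = i) := by
    ext s
    simp only [Finset.mem_filter, Finset.mem_union]
    constructor
    · rintro ⟨hD, hs⟩
      by_cases hsi : s = i
      · exact Or.inr ⟨hD, hsi⟩
      · exact Or.inl ⟨hD, by omega⟩
    · rintro (⟨hD, hs⟩ | ⟨hD, rfl⟩)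
      · exact ⟨hD, by omega⟩
      · exact ⟨hD, le_rfl⟩
  rw [hu, Finset.card_union_of_disjoint, Finset.filter_eq']
  · split_ifs <;> simp
  · rw [Finset.disjoint_left]
    intro s hs1 hs2
    simp only [Finset.mem_filter] at *
    omega

lemma dC_last {i : ℕ} (h : ¬ (i + 1 < n)) : dC π i = 0 := by
  rw [dC, Finset.card_eq_zero, Finset.filter_eq_empty_iff]
  intro s hs
  rw [desSet, Finset.mem_filter, Finset.mem_range] at hs
  omega

noncomputable def gmap (f : Fin n → ℕ) (i : Fin n) : ℕ :=
  (∑ j ∈ univ.filter (fun j => i ≤ j), f j) + dC π (i : ℕ)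

lemma filter_ge_split (i : ℕ) (h : i + 1 < n) :
    (univ.filter (fun j : Fin n => (⟨i, Nat.lt_of_succ_lt h⟩ : Fin n) ≤ j))
      = insert ⟨i, Nat.lt_of_succ_lt h⟩ (univ.filter fun j : Fin n => (⟨i + 1, h⟩ : Fin n) ≤ j) := by
  ext j
  simp only [Finset.mem_filter, Finset.mem_univ, true_and, Finset.mem_insert, Fin.le_def,
    Fin.ext_iff]
  omega

lemma gmap_rec (f : Fin n → ℕ) (i : ℕ) (h : i + 1 < n) :
    gmap π f ⟨i, Nat.lt_of_succ_lt h⟩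
      = f ⟨i, Nat.lt_of_succ_lt h⟩ + gmap π f ⟨i + 1, h⟩ + (if i ∈ desSet π then 1 else 0) := by
  rw [gmap, gmap, filter_ge_split i h, Finset.sum_insert, dC_split]
  · simp only [Fin.val_mk]
    omega
  · simp only [Finset.mem_filter, Finset.mem_univ, true_and, Fin.le_def]
    omega

lemma gmap_last (f : Fin n → ℕ) (i : Fin n) (h : ¬ ((i : ℕ) + 1 < n)) :
    gmap π f i = f i := by
  have hf : univ.filter (fun j : Fin n => i ≤ j) = {i} := by
    ext j
    simp only [Finset.mem_filter, Finset.mem_univ, true_and, Finset.mem_singleton, Fin.le_def,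
      Fin.ext_iff]
    have := j.isLt
    omega
  rw [gmap, hf, Finset.sum_singleton, dC_last π h, add_zero]

def CC (c : Fin n → ℕ) : Prop :=
  ∀ i : ℕ, ∀ h : i + 1 < n,
    c ⟨i + 1, h⟩ + (if i ∈ desSet π then 1 else 0) ≤ c ⟨i, Nat.lt_of_succ_lt h⟩

lemma CC_gmap (f : Fin n → ℕ) : CC π (gmap π f) := by
  intro i h
  rw [gmap_rec π f i h]
  omega

lemma gmap_inj : Function.Injective (gmap π) := by
  intro f f' h
  funext i
  by_cases hi : (i : ℕ) + 1 < n
  · have e1 := gmap_rec π f (i : ℕ) hi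
    have e2 := gmap_rec π f' (i : ℕ) hi
    have e3 := congrFun h ⟨(i : ℕ), i.isLt⟩
    have e4 := congrFun h ⟨(i : ℕ) + 1, hi⟩
    simp only [Fin.eta] at e1 e2 e3 e4
    omega
  · have e1 := gmap_last π f i hi
    have e2 := gmap_last π f' i hi
    have e3 := congrFun h i
    omega

noncomputable def finv (c : Fin n → ℕ) (i : Fin n) : ℕ :=
  if h : (i : ℕ) + 1 < n then
    c i - c ⟨(i : ℕ) + 1, h⟩ - (if (i : ℕ) ∈ desSet π then 1 else 0)
  else c i

lemma gmap_finv {c : Fin n → ℕ} (hc : CC π c) : gmap π (finv π c) = c := by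
  have key : ∀ m : ℕ, ∀ i : Fin n, n - (i : ℕ) ≤ m → gmap π (finv π c) i = c i := by
    intro m
    induction m with
    | zero => intro i hi; have := i.isLt; omega
    | succ m ih =>
      intro i hi
      by_cases h : (i : ℕ) + 1 < n
      · have e1 := gmap_rec π (finv π c) (i : ℕ) h
        have e2 := ih ⟨(i : ℕ) + 1, h⟩ (by simp; omega)
        have e3 := hc (i : ℕ) h
        have e4 : finv π c ⟨(i : ℕ), Nat.lt_of_succ_lt h⟩
            = c i - c ⟨(i : ℕ) + 1, h⟩ - (if (i : ℕ) ∈ desSet π then 1 else 0) := by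
          rw [finv, dif_pos h]
        simp only [Fin.eta] at e1 e2 e3 e4
        omega
      · rw [gmap_last π _ i h, finv, dif_neg h]
  funext i
  exact key n i (by omega)

lemma sum_dC : ∑ i : Fin n, dC π (i : ℕ) = maj π := by
  simp only [dC, Finset.card_filter]
  rw [Finset.sum_comm]
  rw [maj]
  apply Finset.sum_congr rfl
  intro s hs
  have hsn : s < n := by
    rw [desSet, Finset.mem_filter, Finset.mem_range] at hs
    omega
  rw [← Finset.card_filter, card_val_le hsn]

lemma sum_gmap (f : Fin n → ℕ) :
    ∑ i, gmap π f i = (∑ j : Fin n, ((j : ℕ) + 1) * f j) + maj π := by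
  simp only [gmap]
  rw [Finset.sum_add_distrib, sum_dC]
  congr 1
  simp only [Finset.sum_filter]
  rw [Finset.sum_comm]
  apply Finset.sum_congr rfl
  intro j _
  rw [← Finset.sum_filter, Finset.sum_const, smul_eq_mul]
  congr 1
  have he : (univ.filter fun i : Fin n => i ≤ j) = univ.filter fun i : Fin n => (i : ℕ) ≤ (j : ℕ) := by
    apply Finset.filter_congr
    intro i _
    exact Fin.le_def
  rw [he, card_val_le j.isLt]

noncomputable def ccEquiv : (Fin n → ℕ) ≃ {c : Fin n → ℕ // CC π c} :=
  Equiv.ofBijective (fun f => ⟨gmap π f, CC_gmap π f⟩)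
    ⟨fun f f' h => gmap_inj π (congrArg Subtype.val h),
     fun c => ⟨finv π c.1, Subtype.ext (gmap_finv π c.2)⟩⟩

lemma lex_lt_iff {x y : ℕ} {u v : Fin n} :
    toLex (OrderDual.toDual x, u) < toLex (OrderDual.toDual y, v) ↔
      (y < x ∨ (x = y ∧ u < v)) := by
  rw [Prod.Lex.lt_iff]
  simp [OrderDual.toDual_lt_toDual, OrderDual.toDual_inj]

lemma CC_iff (c : Fin n → ℕ) :
    CC π c ↔ StrictMono (fun i : Fin n => toLex (OrderDual.toDual (c i), π i)) := by
  constructor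
  · intro hc
    apply strictMono_of_consec
    intro i hi
    have h1 := hc i hi
    rw [lex_lt_iff]
    by_cases hd : i ∈ desSet π
    · rw [if_pos hd] at h1
      exact Or.inl (by omega)
    · rw [if_neg hd, add_zero] at h1
      rcases lt_or_eq_of_le h1 with hlt | heq
      · exact Or.inl hlt
      · refine Or.inr ⟨heq.symm, ?_⟩
        have hne : π ⟨i, Nat.lt_of_succ_lt hi⟩ ≠ π ⟨i + 1, hi⟩ := fun hcon => by
          have := π.injective hcon
          rw [Fin.ext_iff] at this
          simp only [Fin.val_mk] at this
          omega
        have hnd : ¬ π ⟨i + 1, hi⟩ < π ⟨i, Nat.lt_of_succ_lt hi⟩ :=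
          fun hcon => hd ((mem_desSet π hi).mpr hcon)
        exact (not_lt.mp hnd).lt_of_ne hne
  · intro sm i hi
    have hlt : (⟨i, Nat.lt_of_succ_lt hi⟩ : Fin n) < ⟨i + 1, hi⟩ := by
      rw [Fin.lt_def]; simp only [Fin.val_mk]; omega
    have h1 := sm hlt
    rw [lex_lt_iff] at h1
    by_cases hd : i ∈ desSet π
    · rw [if_pos hd]
      have hdes := (mem_desSet π hi).mp hd
      rcases h1 with h | ⟨-, h⟩
      · omega
      · exact absurd h (lt_asymm hdes)
    · rw [if_neg hd]
      rcases h1 with h | ⟨h, -⟩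
      · omega
      · omega

/-- transport between Compat and CC -/
noncomputable def compatEquiv : {σ : Fin n → ℕ // Compat π σ} ≃ {c : Fin n → ℕ // CC π c} where
  toFun s := ⟨s.1 ∘ π, (CC_iff π _).mpr s.2⟩
  invFun s := ⟨s.1 ∘ π.symm, by
    have h := (CC_iff π _).mp s.2
    have : (fun i : Fin n => keyF (s.1 ∘ π.symm) (π i))
        = fun i : Fin n => toLex (OrderDual.toDual (s.1 i), π i) := by
      funext i
      simp [keyF, Function.comp, Equiv.symm_apply_apply]
    rw [Compat, this]
    exact h⟩
  left_inv s := by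
    apply Subtype.ext
    funext x
    simp [Function.comp]
  right_inv s := by
    apply Subtype.ext
    funext x
    simp [Function.comp]

end Descents

end HLF
namespace HLF
open Finset
open scoped ENNReal

lemma tsum_pi : ∀ {n : ℕ} (g : Fin n → ℕ → ℝ≥0∞),
    ∑' f : Fin n → ℕ, ∏ i, g i (f i) = ∏ i, ∑' t, g i t := by
  intro n
  induction n with
  | zero =>
    intro g
    have h1 : ∀ f : Fin 0 → ℕ, ∏ i, g i (f i) = 1 := fun f => by simp
    simp only [h1]
    have h2 : ∏ i : Fin 0, ∑' t, g i t = 1 := by simp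
    rw [h2]
    exact tsum_eq_single (fun i => i.elim0) (fun b hb => absurd (Subsingleton.elim _ _) hb)
  | succ m ih =>
    intro g
    rw [← (Fin.consEquiv fun _ : Fin (m + 1) => ℕ).tsum_eq
      (fun f : Fin (m + 1) → ℕ => ∏ i, g i (f i))]
    have h1 : ∀ p : ℕ × (Fin m → ℕ),
        (∏ i, g i ((Fin.consEquiv fun _ : Fin (m + 1) => ℕ) p i))
          = g 0 p.1 * ∏ i : Fin m, g i.succ (p.2 i) := by
      intro p
      rw [Fin.prod_univ_succ]
      simp [Fin.consEquiv]
    rw [tsum_congr h1, ENNReal.tsum_prod']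
    have h2 : ∀ a : ℕ, ∑' b : Fin m → ℕ, g 0 a * ∏ i : Fin m, g i.succ (b i)
        = g 0 a * ∏ i : Fin m, ∑' t, g i.succ t := by
      intro a
      rw [ENNReal.tsum_mul_left, ih]
    rw [tsum_congr h2, ENNReal.tsum_mul_right, Fin.prod_univ_succ]

lemma tsum_geom_coef (Q : ℝ≥0∞) (c : ℕ) : ∑' t : ℕ, Q ^ (c * t) = (1 - Q ^ c)⁻¹ := by
  have h : ∀ t : ℕ, Q ^ (c * t) = (Q ^ c) ^ t := fun t => by rw [pow_mul]
  rw [tsum_congr h, ENNReal.tsum_geometric]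

end HLF

open scoped ENNReal

open Classical in
/-- Hook length formula for the maj-generating function of linear extensions of a
naturally labeled forest `F` on `Fin n`:
`∑_{π ∈ L(F)} q^{maj π} = [n]_q! / ∏_v [h_F(v)]_q`.  A permutation `π` lies in `L(F)`
iff reading labels `π(0), π(1), …` gives a linear extension, i.e.
`le (π i) (π j) → i ≤ j`. -/
theorem stmt16 (n : ℕ) (le : Fin n → Fin n → Prop) (hle : IsPartialOrder (Fin n) le)
    (hnat : ∀ i j, le i j → i ≤ j)
    (hforest : ∀ i j k : Fin n, Covers le i j → Covers le i k → j = k)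
    (q : ℝ) (hq0 : 0 < q) (hq1 : q < 1) :
    ∑ π ∈ Finset.univ.filter
        (fun π : Equiv.Perm (Fin n) => ∀ i j : Fin n, le (π i) (π j) → i ≤ j),
      (q : ℝ) ^ maj π =
      qFact q n / ∏ i : Fin n, qNum q (Finset.univ.filter fun j => le j i).card := by
  classical
  set L : Finset (Equiv.Perm (Fin n)) := Finset.univ.filter
    (fun π : Equiv.Perm (Fin n) => ∀ i j : Fin n, le (π i) (π j) → i ≤ j) with hLdef
  set Q : ℝ≥0∞ := ENNReal.ofReal q with hQdef
  set T : ℝ≥0∞ := ∑' s : {σ : Fin n → ℕ // HLF.Antit le σ}, Q ^ (∑ i, s.1 i) with hTdef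
  -- Equation I : hook product
  have hI : T = ∏ j : Fin n, (1 - Q ^ (HLF.down le j).card)⁻¹ := by
    rw [hTdef, ← (HLF.antEquiv hle hforest).tsum_eq
      (fun s : {σ : Fin n → ℕ // HLF.Antit le σ} => Q ^ (∑ i, s.1 i))]
    have h1 : ∀ τ : Fin n → ℕ,
        Q ^ (∑ i, ((HLF.antEquiv hle hforest) τ).1 i)
          = ∏ j : Fin n, Q ^ ((HLF.down le j).card * τ j) := by
      intro τ
      have h2 : (∑ i, ((HLF.antEquiv hle hforest) τ).1 i)
          = ∑ j : Fin n, (HLF.down le j).card * τ j := HLF.sum_σof τ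
      rw [h2, ← Finset.prod_pow_eq_pow_sum]
    rw [tsum_congr h1, HLF.tsum_pi (fun j t => Q ^ ((HLF.down le j).card * t))]
    exact Finset.prod_congr rfl fun j _ => HLF.tsum_geom_coef Q _
  -- Equation II : linear extension decomposition
  have hII : T = (∑ π ∈ L, Q ^ maj π) * ∏ k ∈ Finset.range n, (1 - Q ^ (k + 1))⁻¹ := by
    have hA : T = ∑' σ : Fin n → ℕ,
        Set.indicator {σ : Fin n → ℕ | HLF.Antit le σ} (fun σ => Q ^ (∑ i, σ i)) σ := by
      rw [hTdef]
      exact tsum_subtype {σ : Fin n → ℕ | HLF.Antit le σ} (fun σ => Q ^ (∑ i, σ i))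
    rw [hA]
    have hpt : ∀ σ : Fin n → ℕ,
        Set.indicator {σ : Fin n → ℕ | HLF.Antit le σ} (fun σ => Q ^ (∑ i, σ i)) σ
          = ∑ π ∈ L, Set.indicator {σ : Fin n → ℕ | HLF.Compat π σ}
              (fun σ => Q ^ (∑ i, σ i)) σ := by
      intro σ
      simp only [Set.indicator_apply, Set.mem_setOf_eq]
      rw [← Finset.sum_filter]
      by_cases hσ : HLF.Antit le σ
      · rw [hLdef, HLF.filter_compat_of_antit hnat hσ, Finset.sum_singleton, if_pos hσ]
      · rw [hLdef, HLF.filter_compat_of_not hσ, Finset.sum_empty, if_neg hσ]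
    rw [tsum_congr hpt, Summable.tsum_finsetSum (fun π _ => ENNReal.summable)]
    have hper : ∀ π : Equiv.Perm (Fin n),
        (∑' σ : Fin n → ℕ, Set.indicator {σ : Fin n → ℕ | HLF.Compat π σ}
            (fun σ => Q ^ (∑ i, σ i)) σ)
          = Q ^ maj π * ∏ k ∈ Finset.range n, (1 - Q ^ (k + 1))⁻¹ := by
      intro π
      have hB : (∑' σ : Fin n → ℕ, Set.indicator {σ : Fin n → ℕ | HLF.Compat π σ}
            (fun σ => Q ^ (∑ i, σ i)) σ)
          = ∑' s : {σ : Fin n → ℕ // HLF.Compat π σ}, Q ^ (∑ i, s.1 i) :=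
        (tsum_subtype {σ : Fin n → ℕ | HLF.Compat π σ} (fun σ => Q ^ (∑ i, σ i))).symm
      rw [hB]
      have e1 : (∑' s : {σ : Fin n → ℕ // HLF.Compat π σ}, Q ^ (∑ i, s.1 i))
          = ∑' c : {c : Fin n → ℕ // HLF.CC π c}, Q ^ (∑ i, c.1 i) := by
        rw [← (HLF.compatEquiv π).tsum_eq
          (fun c : {c : Fin n → ℕ // HLF.CC π c} => Q ^ (∑ i, c.1 i))]
        apply tsum_congr
        intro s
        congr 1
        exact (Equiv.sum_comp π s.1).symm
      rw [e1, ← (HLF.ccEquiv π).tsum_eq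
        (fun c : {c : Fin n → ℕ // HLF.CC π c} => Q ^ (∑ i, c.1 i))]
      have e2 : ∀ f : Fin n → ℕ,
          Q ^ (∑ i, ((HLF.ccEquiv π) f).1 i)
            = Q ^ maj π * ∏ j : Fin n, Q ^ (((j : ℕ) + 1) * f j) := by
        intro f
        have h3 : (∑ i, ((HLF.ccEquiv π) f).1 i)
            = (∑ j : Fin n, ((j : ℕ) + 1) * f j) + maj π := HLF.sum_gmap π f
        rw [h3, pow_add, mul_comm, ← Finset.prod_pow_eq_pow_sum]
      rw [tsum_congr e2, ENNReal.tsum_mul_left,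
        HLF.tsum_pi (fun j t => Q ^ (((j : ℕ) + 1) * t))]
      congr 1
      have h4 : ∀ j : Fin n, (∑' t : ℕ, Q ^ (((j : ℕ) + 1) * t)) = (1 - Q ^ ((j : ℕ) + 1))⁻¹ :=
        fun j => HLF.tsum_geom_coef Q _
      rw [Finset.prod_congr rfl (fun j _ => h4 j)]
      exact Fin.prod_univ_eq_prod_range (fun k => (1 - Q ^ (k + 1))⁻¹) n
    rw [Finset.sum_congr rfl (fun π _ => hper π), ← Finset.sum_mul]
  -- combine and pass to real numbers
  have hEq : (∏ j : Fin n, (1 - Q ^ (HLF.down le j).card)⁻¹)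
      = (∑ π ∈ L, Q ^ maj π) * ∏ k ∈ Finset.range n, (1 - Q ^ (k + 1))⁻¹ := by
    rw [← hI, hII]
  have hQpow : ∀ m : ℕ, Q ^ m = ENNReal.ofReal (q ^ m) := fun m =>
    (ENNReal.ofReal_pow hq0.le m).symm
  have hqm1 : ∀ m : ℕ, q ^ m ≤ 1 := fun m => pow_le_one₀ hq0.le hq1.le
  have hsub : ∀ m : ℕ, (1 - ENNReal.ofReal (q ^ m)) = ENNReal.ofReal (1 - q ^ m) := by
    intro m
    rw [← ENNReal.ofReal_one, ← ENNReal.ofReal_sub _ (pow_nonneg hq0.le m)]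
  -- toReal of both sides
  have hReal : (∏ j : Fin n, (1 - q ^ (HLF.down le j).card)⁻¹)
      = (∑ π ∈ L, q ^ maj π) * ∏ k ∈ Finset.range n, (1 - q ^ (k + 1))⁻¹ := by
    have := congrArg ENNReal.toReal hEq
    rw [ENNReal.toReal_prod, ENNReal.toReal_mul, ENNReal.toReal_prod,
      ENNReal.toReal_sum (fun π _ => by rw [hQpow]; exact ENNReal.ofReal_ne_top)] at this
    simp only [ENNReal.toReal_inv, hsub, hQpow,
      ENNReal.toReal_ofReal (sub_nonneg.mpr (hqm1 _)),
      ENNReal.toReal_ofReal (pow_nonneg hq0.le _)] at this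
    exact this
  -- positivity facts
  have hpos : ∀ m : ℕ, 1 ≤ m → 0 < 1 - q ^ m := fun m hm =>
    sub_pos.mpr (pow_lt_one₀ hq0.le hq1 (by omega))
  have hcard : ∀ j : Fin n, 1 ≤ (HLF.down le j).card := fun j =>
    Finset.card_pos.mpr ⟨j, by simp [HLF.down, hle.toIsPreorder.toRefl.refl j]⟩
  have hPh : 0 < ∏ j : Fin n, (1 - q ^ (HLF.down le j).card) :=
    Finset.prod_pos fun j _ => hpos _ (hcard j)
  have hPn : 0 < ∏ k ∈ Finset.range n, (1 - q ^ (k + 1)) :=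
    Finset.prod_pos fun k _ => hpos _ (by omega)
  have h1q : (0 : ℝ) < 1 - q := by linarith
  -- solve for the sum
  have hS : (∑ π ∈ L, q ^ maj π)
      = (∏ k ∈ Finset.range n, (1 - q ^ (k + 1)))
        / (∏ j : Fin n, (1 - q ^ (HLF.down le j).card)) := by
    rw [Finset.prod_inv_distrib, Finset.prod_inv_distrib] at hReal
    field_simp at hReal
    rw [eq_div_iff hPh.ne']
    linarith [hReal]
  -- rewrite the RHS of the goal
  have e1 : qFact q n = (∏ k ∈ Finset.range n, (1 - q ^ (k + 1))) / (1 - q) ^ n := by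
    rw [qFact]
    simp only [qNum]
    rw [Finset.prod_div_distrib, Finset.prod_const, Finset.card_range]
  have e2 : (∏ i : Fin n, qNum q (Finset.univ.filter fun j => le j i).card)
      = (∏ j : Fin n, (1 - q ^ (HLF.down le j).card)) / (1 - q) ^ n := by
    simp only [qNum]
    rw [Finset.prod_div_distrib, Finset.prod_const, Finset.card_univ, Fintype.card_fin]
    rfl
  rw [e2, e1, hS]
  rw [div_div_div_cancel_right₀]
  exact (pow_ne_zero n h1q.ne')
end
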